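/- arXiv:1907.10269 — 6 statements merged into one kernel-verified Lean document; each statement's English description precedes it below -/
import Mathlib

section
/- Let p, q be continuous real-valued functions on [t₀,∞) with p(t) > 0, and let α₊ be a positive continuously differentiable solution on [t₀,∞) of the Riccati equation α'(t) + α(t)²/p(t) + q(t)α(t)/p(t) + r(t) = 0 with r(t) ≥ 0 for all t ≥ t₀. Then α₊(t) ≤ α̃₊(t) for all t ≥ t₀, where α̃₊(t) = α₊(t₀)·exp(-∫_{t₀}^t q(s)/p(s) ds) / (1 + α₊(t₀)·∫_{t₀}^t exp(-∫_{t₀}^τ q(s)/p(s) ds)/p(τ) dτ). -/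
/-!
Multiplying by the integrating factor `E t = exp (-∫ₜ₀ᵗ q/p)` linearises the reduced Riccati
equation in `1/α`: along a subsolution `α' ≤ -(α²/p + qα/p)` the function `E/α - ∫ₜ₀ᵗ E/p` has
derivative `E (-α' - α²/p - qα/p) / α² ≥ 0`, hence is at least its value `1/α t₀` at `t₀`.
Solving this for `α t` gives the bound. The solution of the full equation with `r ≥ 0` is such a
subsolution.
-/

open MeasureTheory Set Filter

noncomputable def expNegIntegral (a : ℝ) (c : ℝ → ℝ) (t : ℝ) : ℝ :=
  Real.exp (-∫ s in a..t, c s)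

lemma hasDerivAt_expNegIntegral {c : ℝ → ℝ} (hc : Continuous c) (a t : ℝ) :
    HasDerivAt (expNegIntegral a c) (-c t * expNegIntegral a c t) t :=
  ((hc.integral_hasStrictDerivAt a t).hasDerivAt.neg).exp.congr_deriv (mul_comm _ _)

lemma expNegIntegral_pos (a : ℝ) (c : ℝ → ℝ) (t : ℝ) : 0 < expNegIntegral a c t :=
  Real.exp_pos _

lemma expNegIntegral_self (a : ℝ) (c : ℝ → ℝ) : expNegIntegral a c a = 1 := by
  simp [expNegIntegral]

lemma expNegIntegral_congr {a : ℝ} {c d : ℝ → ℝ} (hcd : EqOn c d (Ici a)) :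
    EqOn (expNegIntegral a c) (expNegIntegral a d) (Ici a) := fun t ht => by
  simp only [expNegIntegral]
  congr 2
  exact intervalIntegral.integral_congr fun s hs => hcd (by rw [uIcc_of_le ht] at hs; exact hs.1)

lemma ContinuousOn.continuous_comp_max {f : ℝ → ℝ} {a : ℝ} (hf : ContinuousOn f (Ici a)) :
    Continuous fun t => f (max t a) :=
  hf.comp_continuous (continuous_id.max continuous_const) fun t => le_max_right t a

lemma eqOn_comp_max (f : ℝ → ℝ) (a : ℝ) : EqOn (fun t => f (max t a)) f (Ici a) :=
  fun t ht => by simp only [max_eq_left (mem_Ici.1 ht)]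

section ReducedRiccati

variable {a : ℝ} {p q α α' : ℝ → ℝ}

lemma monotoneOn_expNegIntegral_div_sub_integral (hpc : Continuous p) (hqc : Continuous q)
    (hp : ∀ t, 0 < p t) (hα : ∀ t ∈ Ici a, 0 < α t)
    (hα' : ∀ t ∈ Ici a, HasDerivAt α (α' t) t)
    (hsub : ∀ t ∈ Ici a, α' t ≤ -(α t ^ 2 / p t + q t * α t / p t)) :
    MonotoneOn (fun t => expNegIntegral a (fun s => q s / p s) t / α t -
      ∫ τ in a..t, expNegIntegral a (fun s => q s / p s) τ / p τ) (Ici a) := by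
  set E := expNegIntegral a fun s => q s / p s
  have hE : ∀ t, HasDerivAt E (-(q t / p t) * E t) t :=
    hasDerivAt_expNegIntegral (c := fun s => q s / p s) (hqc.div hpc fun t => (hp t).ne') a
  have hEp : Continuous fun τ => E τ / p τ :=
    (continuous_iff_continuousAt.2 fun t => (hE t).continuousAt).div hpc fun t => (hp t).ne'
  set u' := fun t => E t * (-α' t - (α t ^ 2 / p t + q t * α t / p t)) / α t ^ 2
  have hu : ∀ t ∈ Ici a, HasDerivAt (fun t => E t / α t - ∫ τ in a..t, E τ / p τ) (u' t) t := by
    intro t ht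
    refine (((hE t).div (hα' t ht) (hα t ht).ne').sub
      (hEp.integral_hasStrictDerivAt a t).hasDerivAt).congr_deriv ?_
    simp only [u']
    field_simp [(hp t).ne', (hα t ht).ne']
    ring
  refine monotoneOn_of_hasDerivWithinAt_nonneg (convex_Ici a) (f' := u')
    (fun t ht => (hu t ht).continuousAt.continuousWithinAt) (fun t ht => ?_) (fun t ht => ?_)
  · exact (hu t (interior_subset ht)).hasDerivWithinAt
  · have := hsub t (interior_subset ht)
    exact div_nonneg (mul_nonneg (expNegIntegral_pos _ _ t).le (by linarith)) (sq_nonneg _)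

lemma inv_add_integral_le_of_riccati_le (hpc : ContinuousOn p (Ici a))
    (hqc : ContinuousOn q (Ici a)) (hp : ∀ t ∈ Ici a, 0 < p t) (hα : ∀ t ∈ Ici a, 0 < α t)
    (hα' : ∀ t ∈ Ici a, HasDerivAt α (α' t) t)
    (hsub : ∀ t ∈ Ici a, α' t ≤ -(α t ^ 2 / p t + q t * α t / p t)) {t : ℝ} (ht : t ∈ Ici a) :
    (α a)⁻¹ + ∫ τ in a..t, expNegIntegral a (fun s => q s / p s) τ / p τ ≤
      expNegIntegral a (fun s => q s / p s) t / α t := by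
  -- The fundamental theorem of calculus wants continuity on all of `ℝ`: extend `p`, `q`
  -- constantly to the left of `a`.
  set P := fun t => p (max t a)
  set Q := fun t => q (max t a)
  have hPp : EqOn P p (Ici a) := eqOn_comp_max p a
  have hQq : EqOn Q q (Ici a) := eqOn_comp_max q a
  have hE : EqOn (expNegIntegral a fun s => Q s / P s) (expNegIntegral a fun s => q s / p s)
      (Ici a) := expNegIntegral_congr fun s hs => by simp only [hPp hs, hQq hs]
  have hmono := monotoneOn_expNegIntegral_div_sub_integral (p := P) (q := Q)
    hpc.continuous_comp_max hqc.continuous_comp_max (fun t => hp _ (le_max_right t a)) hα hα'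
    (fun t ht => by simpa only [hPp ht, hQq ht] using hsub t ht) self_mem_Ici ht ht
  have hint : ∫ τ in a..t, expNegIntegral a (fun s => Q s / P s) τ / P τ =
      ∫ τ in a..t, expNegIntegral a (fun s => q s / p s) τ / p τ :=
    intervalIntegral.integral_congr fun τ hτ => by
      rw [uIcc_of_le ht] at hτ
      simp only [hE hτ.1, hPp hτ.1]
  simp only [intervalIntegral.integral_same, sub_zero, expNegIntegral_self, one_div, hint,
    hE ht] at hmono
  linarith

end ReducedRiccati

theorem riccati_sub_comparison_general
    (t₀ : ℝ) (p q r α : ℝ → ℝ)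
    (hp : ContinuousOn p (Set.Ici t₀)) (hq : ContinuousOn q (Set.Ici t₀))
    (hppos : ∀ t ∈ Set.Ici t₀, 0 < p t)
    (hrpos : ∀ t ∈ Set.Ici t₀, 0 ≤ r t)
    (hαpos : ∀ t ∈ Set.Ici t₀, 0 < α t)
    (hα : ∀ t ∈ Set.Ici t₀,
      HasDerivAt α (-(α t ^ 2 / p t + q t * α t / p t + r t)) t) :
    ∀ t ∈ Set.Ici t₀,
      α t ≤ α t₀ * Real.exp (-∫ s in t₀..t, q s / p s) /
        (1 + α t₀ * ∫ τ in t₀..t,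
          Real.exp (-∫ s in t₀..τ, q s / p s) / p τ) := by
  intro t ht
  have hbound := inv_add_integral_le_of_riccati_le hp hq hppos hαpos hα
    (fun s hs => by linarith [hrpos s hs]) ht
  change α t ≤ α t₀ * expNegIntegral t₀ (fun s => q s / p s) t /
    (1 + α t₀ * ∫ τ in t₀..t, expNegIntegral t₀ (fun s => q s / p s) τ / p τ)
  set E := expNegIntegral t₀ fun s => q s / p s
  set I := ∫ τ in t₀..t, E τ / p τ
  have hα₀ := hαpos t₀ self_mem_Ici
  have hαt := hαpos t ht
  have hI : 0 ≤ I := intervalIntegral.integral_nonneg ht fun τ hτ =>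
    div_nonneg (expNegIntegral_pos _ _ τ).le (hppos τ hτ.1).le
  rw [le_div_iff₀ (by positivity)]
  calc α t * (1 + α t₀ * I) = α t * α t₀ * ((α t₀)⁻¹ + I) := by field_simp
    _ ≤ α t * α t₀ * (E t / α t) := by gcongr
    _ = α t₀ * E t := by field_simp

theorem riccati_sub_comparison
    (t₀ : ℝ) (p q r α : ℝ → ℝ)
    (hp : ContinuousOn p (Set.Ici t₀)) (hq : ContinuousOn q (Set.Ici t₀))
    (hr : ContinuousOn r (Set.Ici t₀))
    (hppos : ∀ t ∈ Set.Ici t₀, 0 < p t)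
    (hrpos : ∀ t ∈ Set.Ici t₀, 0 ≤ r t)
    (hαpos : ∀ t ∈ Set.Ici t₀, 0 < α t)
    (hα : ∀ t ∈ Set.Ici t₀,
      HasDerivAt α (-(α t ^ 2 / p t + q t * α t / p t + r t)) t) :
    ∀ t ∈ Set.Ici t₀,
      α t ≤ α t₀ * Real.exp (-∫ s in t₀..t, q s / p s) /
        (1 + α t₀ * ∫ τ in t₀..t,
          Real.exp (-∫ s in t₀..τ, q s / p s) / p τ) :=
  riccati_sub_comparison_general t₀ p q r α hp hq hppos hrpos hαpos hα
end

section
/- Let p, q be continuous on [t₀,∞) with p > 0, let α₀ > 0, and suppose I(t₀) := ∫_{t₀}^∞ exp(-∫_{t₀}^τ q(s)/p(s) ds)/p(τ) dτ < ∞. With α̃(t) the explicit positive solution of α' + α²/p + qα/p = 0 with α̃(t₀) = α₀, one has for every t ≥ t₀: ∫_t^∞ exp(-∫_t^τ (2α̃(s)+q(s))/p(s) ds)/p(τ) dτ = 1 / (α̃(t) + 1/I(t)), where I(t) = ∫_t^∞ exp(-∫_t^τ q(s)/p(s) ds)/p(τ) dτ. -/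
open MeasureTheory Set Filter Topology

/-!
With `w = exp (-∫_{t₀} q/p) / p` (`expWeight`) and `D = 1 + α₀ ∫_{t₀} w` (`riccatiDenom`),
`α̃ = α₀ p w / D`, so `α̃ / p = D' / D`. Hence the integrand on the left is
`D(t)² e^{∫_{t₀}^t q/p} w(τ) / D(τ)²`, and `α₀ w / D² = (-1/D)'` integrates over `(t, ∞)` to
`1/D(t) - 1/D(∞)`. Likewise `I(t) = e^{∫_{t₀}^t q/p} ∫_t^∞ w` with `α₀ ∫_t^∞ w = D(∞) - D(t)`,
and the identity reduces to algebra in `D(t)`, `D(∞)` and `e^{∫_{t₀}^t q/p}`.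
-/

section PrimitiveOnIci

variable {f : ℝ → ℝ} {a : ℝ}

theorem ContinuousOn.intervalIntegrable_of_Ici (hf : ContinuousOn f (Ici a)) {b c : ℝ}
    (hb : a ≤ b) (hc : a ≤ c) : IntervalIntegrable f volume b c :=
  (hf.mono fun _ hx => le_trans (le_min hb hc) hx.1).intervalIntegrable

theorem ContinuousOn.hasDerivAt_integral_of_Ici (hf : ContinuousOn f (Ici a)) {x : ℝ}
    (hx : a < x) : HasDerivAt (fun u => ∫ s in a..u, f s) (f x) x :=
  intervalIntegral.integral_hasDerivAt_right (hf.intervalIntegrable_of_Ici le_rfl hx.le)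
    ((hf.mono Ioi_subset_Ici_self).stronglyMeasurableAtFilter isOpen_Ioi x hx)
    (hf.continuousAt (Ici_mem_nhds hx))

theorem ContinuousOn.continuousOn_integral_of_Ici (hf : ContinuousOn f (Ici a)) :
    ContinuousOn (fun u => ∫ s in a..u, f s) (Ici a) := by
  intro x hx
  have hax : a ≤ x + 1 := by linarith [mem_Ici.1 hx]
  have hcont : ContinuousOn (fun u => ∫ s in a..u, f s) (Icc a (x + 1)) := by
    simpa [uIcc_of_le hax] using
      intervalIntegral.continuousOn_primitive_interval'
        (hf.intervalIntegrable_of_Ici le_rfl hax) left_mem_uIcc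
  exact (hcont x ⟨hx, by linarith⟩).mono_of_mem_nhdsWithin
    (inter_mem_nhdsWithin _ (Iic_mem_nhds (by linarith)))

end PrimitiveOnIci

section DerivativeQuotients

variable {D D' : ℝ → ℝ} {a b L : ℝ}

theorem integral_div_eq_log_sub_log (hab : a ≤ b) (hD : ContinuousOn D (Icc a b))
    (hD' : ContinuousOn D' (Icc a b)) (hderiv : ∀ x ∈ Ioo a b, HasDerivAt D (D' x) x)
    (hpos : ∀ x ∈ Icc a b, 0 < D x) :
    ∫ x in a..b, D' x / D x = Real.log (D b) - Real.log (D a) :=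
  intervalIntegral.integral_eq_sub_of_hasDerivAt_of_le hab (hD.log fun x hx => (hpos x hx).ne')
    (fun x hx => (hderiv x hx).log (hpos x (Ioo_subset_Icc_self hx)).ne')
    ((hD'.div hD fun x hx => (hpos x hx).ne').intervalIntegrable_of_Icc hab)

theorem integral_Ioi_div_sq_eq_inv_sub_inv (hD : ContinuousWithinAt D (Ici a) a)
    (hderiv : ∀ x ∈ Ioi a, HasDerivAt D (D' x) x) (hD' : ∀ x ∈ Ioi a, 0 ≤ D' x)
    (hpos : ∀ x ∈ Ici a, 0 < D x) (hlim : Tendsto D atTop (𝓝 L)) (hL : 0 < L) :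
    ∫ x in Ioi a, D' x / D x ^ 2 = (D a)⁻¹ - L⁻¹ := by
  have hneg_inv : ∀ x ∈ Ioi a, HasDerivAt (fun y => -(D y)⁻¹) (D' x / D x ^ 2) x := fun x hx => by
    have h := ((hderiv x hx).inv (hpos x (Ioi_subset_Ici_self hx)).ne').neg
    rwa [neg_div, neg_neg] at h
  rw [integral_Ioi_of_hasDerivAt_of_nonneg (g := fun y => -(D y)⁻¹)
    (hD.inv₀ (hpos a self_mem_Ici).ne').neg hneg_inv
    (fun x hx => div_nonneg (hD' x hx) (sq_nonneg _)) (hlim.inv₀ hL.ne').neg]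
  ring

end DerivativeQuotients

theorem setIntegral_Ioi_pos {f : ℝ → ℝ} {a : ℝ} (hf : ∀ x ∈ Ioi a, 0 < f x)
    (hfi : IntegrableOn f (Ioi a)) : 0 < ∫ x in Ioi a, f x := by
  rw [setIntegral_pos_iff_support_of_nonneg_ae
    ((ae_restrict_iff' measurableSet_Ioi).2 (Eventually.of_forall fun x hx => (hf x hx).le)) hfi,
    inter_eq_self_of_subset_right fun x hx => Function.mem_support.2 (hf x hx).ne',
    Real.volume_Ioi]
  exact ENNReal.zero_lt_top

noncomputable section

def expWeight (p q : ℝ → ℝ) (t₀ τ : ℝ) : ℝ :=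
  Real.exp (-∫ s in t₀..τ, q s / p s) / p τ

def riccatiDenom (p q : ℝ → ℝ) (t₀ α₀ t : ℝ) : ℝ :=
  1 + α₀ * ∫ ξ in t₀..t, expWeight p q t₀ ξ

def riccatiSolution (p q : ℝ → ℝ) (t₀ α₀ t : ℝ) : ℝ :=
  α₀ * Real.exp (-∫ ζ in t₀..t, q ζ / p ζ) / riccatiDenom p q t₀ α₀ t

variable {p q : ℝ → ℝ} {t₀ α₀ t τ : ℝ}

theorem continuousOn_expWeight (hp : ContinuousOn p (Ici t₀)) (hq : ContinuousOn q (Ici t₀))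
    (hppos : ∀ t ∈ Ici t₀, 0 < p t) : ContinuousOn (expWeight p q t₀) (Ici t₀) :=
  ((hq.div hp fun s hs => (hppos s hs).ne').continuousOn_integral_of_Ici.neg.rexp).div hp
    fun s hs => (hppos s hs).ne'

theorem expWeight_pos (hppos : ∀ t ∈ Ici t₀, 0 < p t) (hτ : τ ∈ Ici t₀) :
    0 < expWeight p q t₀ τ :=
  div_pos (Real.exp_pos _) (hppos τ hτ)

theorem exp_neg_integral_div_eq_mul_expWeight (hp : ContinuousOn p (Ici t₀))
    (hq : ContinuousOn q (Ici t₀)) (hppos : ∀ t ∈ Ici t₀, 0 < p t) (ht : t₀ ≤ t) (hτ : t₀ ≤ τ) :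
    Real.exp (-∫ s in t..τ, q s / p s) / p τ =
      Real.exp (∫ s in t₀..t, q s / p s) * expWeight p q t₀ τ := by
  have hqp : ContinuousOn (fun s => q s / p s) (Ici t₀) := hq.div hp fun s hs => (hppos s hs).ne'
  rw [← intervalIntegral.integral_interval_sub_left (hqp.intervalIntegrable_of_Ici le_rfl hτ)
    (hqp.intervalIntegrable_of_Ici le_rfl ht), neg_sub, Real.exp_sub, expWeight, Real.exp_neg]
  ring

theorem riccatiSolution_div (t : ℝ) :
    riccatiSolution p q t₀ α₀ t / p t = α₀ * expWeight p q t₀ t / riccatiDenom p q t₀ α₀ t := by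
  rw [riccatiSolution, expWeight]
  ring

theorem hasDerivAt_riccatiDenom (hp : ContinuousOn p (Ici t₀)) (hq : ContinuousOn q (Ici t₀))
    (hppos : ∀ t ∈ Ici t₀, 0 < p t) (ht : t₀ < t) :
    HasDerivAt (riccatiDenom p q t₀ α₀) (α₀ * expWeight p q t₀ t) t :=
  (((continuousOn_expWeight hp hq hppos).hasDerivAt_integral_of_Ici ht).const_mul α₀).const_add 1

theorem continuousOn_riccatiDenom (hp : ContinuousOn p (Ici t₀)) (hq : ContinuousOn q (Ici t₀))
    (hppos : ∀ t ∈ Ici t₀, 0 < p t) : ContinuousOn (riccatiDenom p q t₀ α₀) (Ici t₀) :=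
  continuousOn_const.add
    (continuousOn_const.mul (continuousOn_expWeight hp hq hppos).continuousOn_integral_of_Ici)

theorem riccatiDenom_pos (hppos : ∀ t ∈ Ici t₀, 0 < p t) (hα₀ : 0 ≤ α₀) (ht : t₀ ≤ t) :
    0 < riccatiDenom p q t₀ α₀ t :=
  add_pos_of_pos_of_nonneg one_pos <| mul_nonneg hα₀ <|
    intervalIntegral.integral_nonneg ht fun _ hs => (expWeight_pos hppos (mem_Ici.2 hs.1)).le

theorem tendsto_riccatiDenom (hI : IntegrableOn (expWeight p q t₀) (Ici t₀)) :
    Tendsto (riccatiDenom p q t₀ α₀) atTop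
      (𝓝 (1 + α₀ * ∫ x in Ioi t₀, expWeight p q t₀ x)) :=
  ((intervalIntegral_tendsto_integral_Ioi t₀ (hI.mono_set Ioi_subset_Ici_self)
    tendsto_id).const_mul α₀).const_add 1

theorem integral_riccatiSolution_div (hp : ContinuousOn p (Ici t₀))
    (hq : ContinuousOn q (Ici t₀)) (hppos : ∀ t ∈ Ici t₀, 0 < p t) (hα₀ : 0 ≤ α₀)
    (ht : t₀ ≤ t) (htτ : t ≤ τ) :
    ∫ s in t..τ, riccatiSolution p q t₀ α₀ s / p s =
      Real.log (riccatiDenom p q t₀ α₀ τ) - Real.log (riccatiDenom p q t₀ α₀ t) := by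
  have hIcc : Icc t τ ⊆ Ici t₀ := fun x hx => ht.trans hx.1
  simp_rw [riccatiSolution_div]
  exact integral_div_eq_log_sub_log htτ ((continuousOn_riccatiDenom hp hq hppos).mono hIcc)
    ((continuousOn_const.mul (continuousOn_expWeight hp hq hppos)).mono hIcc)
    (fun _ hx => hasDerivAt_riccatiDenom hp hq hppos (ht.trans_lt hx.1))
    fun _ hx => riccatiDenom_pos hppos hα₀ (hIcc hx)

theorem exp_neg_integral_two_riccatiSolution_add (hp : ContinuousOn p (Ici t₀))
    (hq : ContinuousOn q (Ici t₀)) (hppos : ∀ t ∈ Ici t₀, 0 < p t) (hα₀ : 0 < α₀)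
    (ht : t₀ ≤ t) (htτ : t ≤ τ) :
    Real.exp (-∫ s in t..τ, (2 * riccatiSolution p q t₀ α₀ s + q s) / p s) / p τ =
      riccatiDenom p q t₀ α₀ t ^ 2 * Real.exp (∫ s in t₀..t, q s / p s) / α₀ *
        (α₀ * expWeight p q t₀ τ / riccatiDenom p q t₀ α₀ τ ^ 2) := by
  set D := riccatiDenom p q t₀ α₀
  have hτ : t₀ ≤ τ := ht.trans htτ
  have hsol : ContinuousOn (fun s => riccatiSolution p q t₀ α₀ s / p s) (Ici t₀) := by
    simp_rw [riccatiSolution_div]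
    exact (continuousOn_const.mul (continuousOn_expWeight hp hq hppos)).div
      (continuousOn_riccatiDenom hp hq hppos)
      fun x hx => (riccatiDenom_pos hppos hα₀.le hx).ne'
  have hqp : ContinuousOn (fun s => q s / p s) (Ici t₀) := hq.div hp fun s hs => (hppos s hs).ne'
  have hsplit : ∫ s in t..τ, (2 * riccatiSolution p q t₀ α₀ s + q s) / p s =
      2 * (Real.log (D τ) - Real.log (D t)) + ∫ s in t..τ, q s / p s := by
    rw [← integral_riccatiSolution_div hp hq hppos hα₀.le ht htτ,
      ← intervalIntegral.integral_const_mul,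
      ← intervalIntegral.integral_add ((hsol.intervalIntegrable_of_Ici ht hτ).const_mul 2)
        (hqp.intervalIntegrable_of_Ici ht hτ)]
    exact intervalIntegral.integral_congr fun s _ => by ring
  have hDt : 0 < D t := riccatiDenom_pos hppos hα₀.le ht
  have hDτ : 0 < D τ := riccatiDenom_pos hppos hα₀.le hτ
  rw [hsplit, neg_add, Real.exp_add, mul_div_assoc,
    exp_neg_integral_div_eq_mul_expWeight hp hq hppos ht hτ,
    show -(2 * (Real.log (D τ) - Real.log (D t))) = Real.log (D t ^ 2) - Real.log (D τ ^ 2) by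
      simp only [Real.log_pow]; push_cast; ring,
    Real.exp_sub, Real.exp_log (by positivity), Real.exp_log (by positivity)]
  field_simp

theorem integral_Ioi_mul_expWeight (hp : ContinuousOn p (Ici t₀)) (hq : ContinuousOn q (Ici t₀))
    (hppos : ∀ t ∈ Ici t₀, 0 < p t) (hα₀ : 0 ≤ α₀)
    (hI : IntegrableOn (expWeight p q t₀) (Ici t₀)) (ht : t₀ ≤ t) :
    ∫ x in Ioi t, α₀ * expWeight p q t₀ x =
      1 + α₀ * (∫ x in Ioi t₀, expWeight p q t₀ x) - riccatiDenom p q t₀ α₀ t :=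
  integral_Ioi_of_hasDerivAt_of_nonneg
    ((continuousOn_riccatiDenom hp hq hppos).continuousWithinAt ht |>.mono (Ici_subset_Ici.2 ht))
    (fun _ hx => hasDerivAt_riccatiDenom hp hq hppos (ht.trans_lt hx))
    (fun _ hx => mul_nonneg hα₀ (expWeight_pos hppos (mem_Ici.2 (ht.trans hx.le))).le)
    (tendsto_riccatiDenom hI)

theorem integral_Ioi_mul_expWeight_div_sq (hp : ContinuousOn p (Ici t₀))
    (hq : ContinuousOn q (Ici t₀)) (hppos : ∀ t ∈ Ici t₀, 0 < p t) (hα₀ : 0 ≤ α₀)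
    (hI : IntegrableOn (expWeight p q t₀) (Ici t₀)) (ht : t₀ ≤ t) :
    ∫ x in Ioi t, α₀ * expWeight p q t₀ x / riccatiDenom p q t₀ α₀ x ^ 2 =
      (riccatiDenom p q t₀ α₀ t)⁻¹ - (1 + α₀ * ∫ x in Ioi t₀, expWeight p q t₀ x)⁻¹ :=
  integral_Ioi_div_sq_eq_inv_sub_inv
    ((continuousOn_riccatiDenom hp hq hppos).continuousWithinAt ht |>.mono (Ici_subset_Ici.2 ht))
    (fun _ hx => hasDerivAt_riccatiDenom hp hq hppos (ht.trans_lt hx))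
    (fun _ hx => mul_nonneg hα₀ (expWeight_pos hppos (mem_Ici.2 (ht.trans hx.le))).le)
    (fun _ hx => riccatiDenom_pos hppos hα₀ (ht.trans hx))
    (tendsto_riccatiDenom hI)
    (add_pos_of_pos_of_nonneg one_pos (mul_nonneg hα₀ (setIntegral_nonneg measurableSet_Ioi
      fun _ hx => (expWeight_pos hppos (mem_Ici.2 (le_of_lt hx))).le)))

end

theorem tail_integral_identity
    (t₀ : ℝ) (p q : ℝ → ℝ) (α₀ : ℝ)
    (hp : ContinuousOn p (Set.Ici t₀)) (hq : ContinuousOn q (Set.Ici t₀))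
    (hppos : ∀ t ∈ Set.Ici t₀, 0 < p t) (hα₀ : 0 < α₀)
    (hI : MeasureTheory.IntegrableOn
      (fun τ => Real.exp (-∫ s in t₀..τ, q s / p s) / p τ) (Set.Ici t₀)) :
    let αt : ℝ → ℝ := fun t =>
      α₀ * Real.exp (-∫ ζ in t₀..t, q ζ / p ζ) /
        (1 + α₀ * ∫ ξ in t₀..t, Real.exp (-∫ ζ in t₀..ξ, q ζ / p ζ) / p ξ)
    let I : ℝ → ℝ := fun t =>
      ∫ τ in Set.Ici t, Real.exp (-∫ s in t..τ, q s / p s) / p τ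
    ∀ t ∈ Set.Ici t₀,
      (∫ τ in Set.Ici t,
          Real.exp (-∫ s in t..τ, (2 * αt s + q s) / p s) / p τ) =
        1 / (αt t + 1 / I t) := by
  intro αt I t ht
  rw [show αt = riccatiSolution p q t₀ α₀ from rfl]
  replace hI : IntegrableOn (expWeight p q t₀) (Ici t₀) := hI
  set D := riccatiDenom p q t₀ α₀
  set G := ∫ s in t₀..t, q s / p s
  set Δ := ∫ x in Ioi t, expWeight p q t₀ x
  have hDt : 0 < D t := riccatiDenom_pos hppos hα₀.le ht
  have hlim : D t + α₀ * Δ = 1 + α₀ * ∫ x in Ioi t₀, expWeight p q t₀ x := by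
    rw [← integral_const_mul, integral_Ioi_mul_expWeight hp hq hppos hα₀.le hI ht]
    ring
  have hΔ : 0 < Δ := setIntegral_Ioi_pos
    (fun x hx => expWeight_pos hppos (mem_Ici.2 (ht.trans hx.le)))
    (hI.mono_set (Ioi_subset_Ici ht))
  have hLHS : ∫ τ in Ici t,
        Real.exp (-∫ s in t..τ, (2 * riccatiSolution p q t₀ α₀ s + q s) / p s) / p τ =
      D t ^ 2 * Real.exp G / α₀ * ((D t)⁻¹ - (D t + α₀ * Δ)⁻¹) := by
    rw [integral_Ici_eq_integral_Ioi, setIntegral_congr_fun measurableSet_Ioi fun τ hτ =>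
      exp_neg_integral_two_riccatiSolution_add hp hq hppos hα₀ ht hτ.le, integral_const_mul,
      integral_Ioi_mul_expWeight_div_sq hp hq hppos hα₀.le hI ht, hlim]
  have hIt : I t = Real.exp G * Δ := by
    show ∫ τ in Ici t, Real.exp (-∫ s in t..τ, q s / p s) / p τ = _
    rw [integral_Ici_eq_integral_Ioi, setIntegral_congr_fun measurableSet_Ioi fun τ hτ =>
      exp_neg_integral_div_eq_mul_expWeight hp hq hppos ht (ht.trans hτ.le), integral_const_mul]
  rw [hLHS, hIt]
  show _ = 1 / (α₀ * Real.exp (-G) / D t + _)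
  rw [Real.exp_neg]
  field_simp
  ring
end

section
/- Let a, b, c be continuous real-valued functions on [t₀,∞) with a(t) ≥ 0 and c(t) ≤ 0 for all t ≥ t₀. Then for every y₀ ≥ 0 the Riccati equation y'(t) + a(t)y(t)² + b(t)y(t) + c(t) = 0 has a solution y on all of [t₀,∞) with y(t₀) = y₀ and y(t) ≥ 0 for all t ≥ t₀. -/
/-!
On a compact interval `[t₀, T]` the coefficients are bounded, and clamping the unknown to `[0, M]`
makes the Riccati field globally Lipschitz and bounded, so Picard–Lindelöf solves the clamped
equation on all of `[t₀, T]`. The solution cannot become negative, since at `y < 0` the clamped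
field is `-c ≥ 0`. While `y ≥ 0`, the sign of `a` gives `y' ≤ Kb * y + Kc` with `Kb`, `Kc` bounds
of `|b|`, `|c|`, so by Grönwall `y` stays below `M` once `M` is the Grönwall bound at `T`; hence it
solves the Riccati equation itself. Solutions on `[t₀, T]` are unique (the field is locally
Lipschitz), so they glue to a solution on `[t₀, ∞)`, which is continued affinely to the left of `t₀`
to obtain a two-sided derivative there.
-/

open Set Filter Topology NNReal

theorem image_nonneg_of_deriv_right_nonneg_of_neg {f f' : ℝ → ℝ} {a b : ℝ}
    (hf : ContinuousOn f (Icc a b)) (hf' : ∀ x ∈ Ico a b, HasDerivWithinAt f (f' x) (Ici x) x)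
    (ha : 0 ≤ f a) (bound : ∀ x ∈ Ico a b, f x < 0 → 0 ≤ f' x) :
    ∀ x ∈ Icc a b, 0 ≤ f x := by
  -- Fence `-f` by `r * (1 + (x - a))` and let `r → 0`.
  have fence : ∀ x ∈ Icc a b, ∀ r > 0, -f x ≤ r * (1 + (x - a)) := fun x hx r hr =>
    image_le_of_deriv_right_lt_deriv_boundary hf.neg (fun x hx => (hf' x hx).neg)
      (B := fun x => r * (1 + (x - a))) (B' := fun _ => r)
      (by simp only [Pi.neg_apply, sub_self, add_zero, mul_one]; linarith)
      (fun x => by simpa using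
        (((hasDerivAt_id x).sub_const a).const_add 1).const_mul r)
      (fun x hx hfx => by
        rw [Pi.neg_apply] at hfx
        have : f x < 0 := by nlinarith [hx.1]
        linarith [bound x hx this]) hx
  intro x hx
  have hlim : Tendsto (fun r => r * (1 + (x - a))) (𝓝[>] 0) (𝓝 0) :=
    tendsto_nhdsWithin_of_tendsto_nhds ((continuous_mul_const _).tendsto' 0 0 (zero_mul _))
  linarith [ge_of_tendsto hlim (eventually_nhdsWithin_of_forall (fence x hx))]

section

variable {E : Type*} [NormedAddCommGroup E] [NormedSpace ℝ E]

theorem exists_hasDerivWithinAt_Icc_of_lipschitzWith [CompleteSpace E] {v : ℝ → E → E}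
    {tmin tmax : ℝ} (t₀ : Icc tmin tmax) (x₀ : E) {K L : ℝ≥0}
    (hlip : ∀ t ∈ Icc tmin tmax, LipschitzWith K (v t))
    (hcont : ∀ x, ContinuousOn (v · x) (Icc tmin tmax))
    (hbound : ∀ t ∈ Icc tmin tmax, ∀ x, ‖v t x‖ ≤ L) :
    ∃ α : ℝ → E, α t₀ = x₀ ∧
      ∀ t ∈ Icc tmin tmax, HasDerivWithinAt α (v t (α t)) (Icc tmin tmax) t := by
  set a : ℝ≥0 := ⟨L * max (tmax - t₀) (t₀ - tmin), by
    have := t₀.2.2; exact mul_nonneg L.2 (le_max_of_le_left (by linarith))⟩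
  have hPL : IsPicardLindelof v t₀ x₀ a 0 L K :=
    ⟨fun t ht => (hlip t ht).lipschitzOnWith, fun x _ => hcont x,
      fun t ht x _ => hbound t ht x, by rw [NNReal.coe_zero, sub_zero]; exact le_rfl⟩
  exact hPL.exists_eq_forall_mem_Icc_hasDerivWithinAt₀

theorem HasDerivWithinAt.Ici_of_Icc {f : ℝ → E} {f' : E} {t₀ T t : ℝ}
    (hf : HasDerivWithinAt f f' (Icc t₀ T) t) (ht : t ∈ Ico t₀ T) :
    HasDerivWithinAt f f' (Ici t) t :=
  hf.mono_of_mem_nhdsWithin (Icc_mem_nhdsGE_of_mem ht)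

theorem exists_forall_Ici_hasDerivWithinAt_of_forall_Icc {v : ℝ → E → E} {P : ℝ → E → Prop}
    {t₀ : ℝ} {x₀ : E}
    (hex : ∀ T, t₀ < T → ∃ f : ℝ → E, f t₀ = x₀ ∧
      ∀ t ∈ Icc t₀ T, HasDerivWithinAt f (v t (f t)) (Icc t₀ T) t ∧ P t (f t))
    (huniq : ∀ T (f g : ℝ → E),
      (∀ t ∈ Icc t₀ T, HasDerivWithinAt f (v t (f t)) (Icc t₀ T) t) →
      (∀ t ∈ Icc t₀ T, HasDerivWithinAt g (v t (g t)) (Icc t₀ T) t) →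
      f t₀ = g t₀ → EqOn f g (Icc t₀ T)) :
    ∃ f : ℝ → E, f t₀ = x₀ ∧
      ∀ t ∈ Ici t₀, HasDerivWithinAt f (v t (f t)) (Ici t₀) t ∧ P t (f t) := by
  choose! sol hsol₀ hsol using hex
  have hsol_eq : ∀ T T', t₀ < T → T ≤ T' → EqOn (sol T) (sol T') (Icc t₀ T) :=
    fun T T' hT hTT' => huniq T _ _ (fun t ht => (hsol T hT t ht).1)
      (fun t ht => ((hsol T' (hT.trans_le hTT') t (Icc_subset_Icc_right hTT' ht)).1.mono
        (Icc_subset_Icc_right hTT')))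
      (by rw [hsol₀ T hT, hsol₀ T' (hT.trans_le hTT')])
  have hglue : ∀ T, t₀ < T → ∀ t ∈ Icc t₀ T, sol (t + 1) t = sol T t := by
    intro T hT t ht
    have ht₁ : t₀ < t + 1 := by linarith [ht.1]
    rcases le_total T (t + 1) with h | h
    · exact (hsol_eq T _ hT h ht).symm
    · exact hsol_eq _ T ht₁ h ⟨ht.1, by linarith⟩
  refine ⟨fun t => sol (t + 1) t, hsol₀ _ (by linarith), fun t ht => ?_⟩
  have hT : t₀ < t + 1 := by linarith [mem_Ici.mp ht]
  have htT : t ∈ Icc t₀ (t + 1) := ⟨ht, by linarith⟩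
  obtain ⟨hderiv, hP⟩ := hsol (t + 1) hT t htT
  have hnhds : Icc t₀ (t + 1) ∈ 𝓝[Ici t₀] t := by
    rw [← Ici_inter_Iic]
    exact inter_mem_nhdsWithin _ (Iic_mem_nhds (by linarith))
  refine ⟨(hderiv.mono_of_mem_nhdsWithin hnhds).congr_of_eventuallyEq ?_ rfl, hP⟩
  filter_upwards [hnhds] with s hs using hglue _ hT s hs

theorem exists_eqOn_Ici_hasDerivAt {f f' : ℝ → E} {t₀ : ℝ}
    (hf : ∀ t ∈ Ici t₀, HasDerivWithinAt f (f' t) (Ici t₀) t) :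
    ∃ g : ℝ → E, EqOn g f (Ici t₀) ∧ ∀ t ∈ Ici t₀, HasDerivAt g (f' t) t := by
  set g : ℝ → E := fun t => if t₀ ≤ t then f t else f t₀ + (t - t₀) • f' t₀
  have hgf : EqOn g f (Ici t₀) := fun t ht => if_pos ht
  refine ⟨g, hgf, fun t ht => ?_⟩
  rcases (mem_Ici.mp ht).eq_or_lt with rfl | ht'
  · have hright := (hf t₀ ht).congr hgf (hgf ht)
    have hleft : HasDerivWithinAt g (f' t₀) (Iic t₀) t₀ := by
      have hlin : HasDerivAt (fun s => f t₀ + (s - t₀) • f' t₀) (f' t₀) t₀ := by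
        simpa using ((hasDerivAt_id t₀).sub_const t₀).smul_const (f' t₀) |>.const_add (f t₀)
      refine hlin.hasDerivWithinAt.congr (fun s hs => ?_) (by simp [g])
      rcases (mem_Iic.mp hs).lt_or_eq with hs | rfl
      · simp [g, not_le.mpr hs]
      · simp [g]
    simpa using hleft.union hright
  · exact ((hf t ht).hasDerivAt (Ici_mem_nhds ht')).congr_of_eventuallyEq
      (eventuallyEq_of_mem (Ici_mem_nhds ht') hgf)

end

def riccatiField (a b c : ℝ → ℝ) (t y : ℝ) : ℝ := -(a t * y ^ 2 + b t * y + c t)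

section Riccati

variable {a b c : ℝ → ℝ} {t Ka Kb Kc M : ℝ}

theorem lipschitzOnWith_riccatiField (ha : |a t| ≤ Ka) (hb : |b t| ≤ Kb) :
    LipschitzOnWith (Ka * (2 * M) + Kb).toNNReal (riccatiField a b c t)
      (Metric.closedBall 0 M) := by
  refine LipschitzOnWith.of_dist_le_mul fun x hx y hy => ?_
  rw [mem_closedBall_zero_iff, Real.norm_eq_abs] at hx hy
  have hfactor : riccatiField a b c t x - riccatiField a b c t y =
      -((a t * (x + y) + b t) * (x - y)) := by
    simp only [riccatiField]; ring
  have hcoef : |a t * (x + y) + b t| ≤ Ka * (2 * M) + Kb :=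
    calc |a t * (x + y) + b t| ≤ |a t| * |x + y| + |b t| := by
          rw [← abs_mul]; exact abs_add_le _ _
      _ ≤ Ka * (2 * M) + Kb := by
          gcongr
          · exact (abs_nonneg _).trans ha
          · linarith [abs_add_le x y]
  rw [Real.dist_eq, Real.dist_eq, hfactor, abs_neg, abs_mul]
  exact mul_le_mul_of_nonneg_right (hcoef.trans (Real.le_coe_toNNReal _)) (abs_nonneg _)

theorem abs_riccatiField_le (ha : |a t| ≤ Ka) (hb : |b t| ≤ Kb) (hc : |c t| ≤ Kc) {y : ℝ}
    (hy : |y| ≤ M) : |riccatiField a b c t y| ≤ Ka * M ^ 2 + Kb * M + Kc := by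
  have hM : 0 ≤ M := (abs_nonneg _).trans hy
  rw [riccatiField, abs_neg]
  refine (abs_add_three _ _ _).trans ?_
  rw [abs_mul, abs_mul, abs_pow]
  gcongr
  · exact (abs_nonneg _).trans ha
  · exact (abs_nonneg _).trans hb

theorem riccatiField_le (ha : 0 ≤ a t) (hb : |b t| ≤ Kb) (hc : |c t| ≤ Kc) {y z : ℝ}
    (hy : 0 ≤ y) (hyz : y ≤ z) : riccatiField a b c t y ≤ Kb * z + Kc := by
  have hby : -(b t * y) ≤ Kb * z := by
    calc -(b t * y) ≤ |b t| * y := by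
          simpa only [abs_mul, abs_of_nonneg hy] using neg_le_abs (b t * y)
      _ ≤ Kb * z := mul_le_mul hb hyz hy ((abs_nonneg _).trans hb)
  have hay : 0 ≤ a t * y ^ 2 := by positivity
  simp only [riccatiField]
  linarith [neg_le_abs (c t)]

variable {t₀ T : ℝ}

theorem eqOn_Icc_of_hasDerivWithinAt_riccatiField (ha : ContinuousOn a (Icc t₀ T))
    (hb : ContinuousOn b (Icc t₀ T)) {f g : ℝ → ℝ}
    (hf : ∀ t ∈ Icc t₀ T, HasDerivWithinAt f (riccatiField a b c t (f t)) (Icc t₀ T) t)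
    (hg : ∀ t ∈ Icc t₀ T, HasDerivWithinAt g (riccatiField a b c t (g t)) (Icc t₀ T) t)
    (h₀ : f t₀ = g t₀) : EqOn f g (Icc t₀ T) := by
  have hfc : ContinuousOn f (Icc t₀ T) := fun t ht => (hf t ht).continuousWithinAt
  have hgc : ContinuousOn g (Icc t₀ T) := fun t ht => (hg t ht).continuousWithinAt
  obtain ⟨Ka, hKa⟩ := isCompact_Icc.exists_bound_of_continuousOn ha
  obtain ⟨Kb, hKb⟩ := isCompact_Icc.exists_bound_of_continuousOn hb
  obtain ⟨Mf, hMf⟩ := isCompact_Icc.exists_bound_of_continuousOn hfc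
  obtain ⟨Mg, hMg⟩ := isCompact_Icc.exists_bound_of_continuousOn hgc
  exact ODE_solution_unique_of_mem_Icc_right (s := fun _ => Metric.closedBall 0 (max Mf Mg))
    (fun t ht => lipschitzOnWith_riccatiField (hKa t (Ico_subset_Icc_self ht))
      (hKb t (Ico_subset_Icc_self ht)))
    hfc (fun t ht => (hf t (Ico_subset_Icc_self ht)).Ici_of_Icc ht)
    (fun t ht => mem_closedBall_zero_iff.2 ((hMf t (Ico_subset_Icc_self ht)).trans
      (le_max_left _ _)))
    hgc (fun t ht => (hg t (Ico_subset_Icc_self ht)).Ici_of_Icc ht)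
    (fun t ht => mem_closedBall_zero_iff.2 ((hMg t (Ico_subset_Icc_self ht)).trans
      (le_max_right _ _)))
    h₀

theorem exists_hasDerivWithinAt_riccatiField_projIcc (hT : t₀ ≤ T) (hM : 0 ≤ M)
    (ha : ContinuousOn a (Icc t₀ T)) (hb : ContinuousOn b (Icc t₀ T))
    (hc : ContinuousOn c (Icc t₀ T)) (y₀ : ℝ) :
    ∃ y : ℝ → ℝ, y t₀ = y₀ ∧ ∀ t ∈ Icc t₀ T,
      HasDerivWithinAt y (riccatiField a b c t (projIcc 0 M hM (y t))) (Icc t₀ T) t := by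
  obtain ⟨Ka, hKa⟩ := isCompact_Icc.exists_bound_of_continuousOn ha
  obtain ⟨Kb, hKb⟩ := isCompact_Icc.exists_bound_of_continuousOn hb
  obtain ⟨Kc, hKc⟩ := isCompact_Icc.exists_bound_of_continuousOn hc
  have hclamp : ∀ y : ℝ, |(projIcc 0 M hM y : ℝ)| ≤ M := fun y =>
    abs_le.2 ⟨by linarith [(projIcc 0 M hM y).2.1], (projIcc 0 M hM y).2.2⟩
  refine exists_hasDerivWithinAt_Icc_of_lipschitzWith ⟨t₀, left_mem_Icc.2 hT⟩ y₀
    (v := fun t y => riccatiField a b c t (projIcc 0 M hM y))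
    (K := (Ka * (2 * M) + Kb).toNNReal) (L := (Ka * M ^ 2 + Kb * M + Kc).toNNReal)
    (fun t ht => ?_) (fun y => ?_) (fun t ht y => ?_)
  · have hlip := (lipschitzOnWith_riccatiField (c := c) (M := M) (hKa t ht) (hKb t ht)).comp
      ((LipschitzWith.subtype_val _).comp (LipschitzWith.projIcc hM)).lipschitzOnWith
      (s := univ) fun y _ => mem_closedBall_zero_iff.2 (hclamp y)
    rw [mul_one, mul_one, lipschitzOnWith_univ] at hlip
    exact hlip
  · exact (((ha.mul continuousOn_const).add (hb.mul continuousOn_const)).add hc).neg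
  · exact (abs_riccatiField_le (hKa t ht) (hKb t ht) (hKc t ht) (hclamp y)).trans
      (Real.le_coe_toNNReal _)

theorem exists_nonneg_hasDerivWithinAt_riccatiField_Icc (hT : t₀ ≤ T)
    (ha : ContinuousOn a (Icc t₀ T)) (hb : ContinuousOn b (Icc t₀ T))
    (hc : ContinuousOn c (Icc t₀ T))
    (ha₀ : ∀ t ∈ Icc t₀ T, 0 ≤ a t) (hc₀ : ∀ t ∈ Icc t₀ T, c t ≤ 0) {y₀ : ℝ}
    (hy₀ : 0 ≤ y₀) :
    ∃ y : ℝ → ℝ, y t₀ = y₀ ∧ ∀ t ∈ Icc t₀ T,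
      HasDerivWithinAt y (riccatiField a b c t (y t)) (Icc t₀ T) t ∧ 0 ≤ y t := by
  obtain ⟨Kb, hKb⟩ := isCompact_Icc.exists_bound_of_continuousOn hb
  obtain ⟨Kc, hKc⟩ := isCompact_Icc.exists_bound_of_continuousOn hc
  have hKb₀ : 0 ≤ Kb := (norm_nonneg _).trans (hKb t₀ (left_mem_Icc.2 hT))
  have hKc₀ : 0 ≤ Kc := (norm_nonneg _).trans (hKc t₀ (left_mem_Icc.2 hT))
  have hmono := gronwallBound_mono hy₀ hKc₀ hKb₀
  set M := gronwallBound y₀ Kb Kc (T - t₀)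
  have hM : 0 ≤ M := hy₀.trans (by simpa [gronwallBound_x0] using hmono (sub_nonneg.2 hT))
  obtain ⟨y, hy₀', hy⟩ := exists_hasDerivWithinAt_riccatiField_projIcc hT hM ha hb hc y₀
  have hyc : ContinuousOn y (Icc t₀ T) := fun t ht => (hy t ht).continuousWithinAt
  have hy' : ∀ t ∈ Ico t₀ T, HasDerivWithinAt y _ (Ici t) t :=
    fun t ht => (hy t (Ico_subset_Icc_self ht)).Ici_of_Icc ht
  have hnonneg : ∀ t ∈ Icc t₀ T, 0 ≤ y t :=
    image_nonneg_of_deriv_right_nonneg_of_neg hyc hy' (hy₀' ▸ hy₀) fun t ht hneg => by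
      simp [projIcc_of_le_left _ hneg.le, riccatiField, hc₀ t (Ico_subset_Icc_self ht)]
  have hle : ∀ t ∈ Icc t₀ T, y t ≤ M := fun t ht =>
    (le_gronwallBound_of_liminf_deriv_right_le hyc
      (fun x hx r hr => (hy' x hx).liminf_right_slope_le hr) hy₀'.le
      (fun x hx => riccatiField_le (ha₀ x (Ico_subset_Icc_self hx))
        (hKb x (Ico_subset_Icc_self hx)) (hKc x (Ico_subset_Icc_self hx))
        (projIcc 0 M hM (y x)).2.1
        (max_le (hnonneg x (Ico_subset_Icc_self hx)) (min_le_right _ _)))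
      t ht).trans (hmono (by linarith [ht.2]))
  refine ⟨y, hy₀', fun t ht => ⟨?_, hnonneg t ht⟩⟩
  simpa only [projIcc_of_mem _ ⟨hnonneg t ht, hle t ht⟩] using hy t ht

end Riccati

theorem riccati_global_nonneg_solution
    (t₀ : ℝ) (a b c : ℝ → ℝ)
    (ha : ContinuousOn a (Set.Ici t₀)) (hb : ContinuousOn b (Set.Ici t₀))
    (hc : ContinuousOn c (Set.Ici t₀))
    (hapos : ∀ t ∈ Set.Ici t₀, 0 ≤ a t)
    (hcneg : ∀ t ∈ Set.Ici t₀, c t ≤ 0)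
    (y₀ : ℝ) (hy₀ : 0 ≤ y₀) :
    ∃ y : ℝ → ℝ, y t₀ = y₀ ∧
      (∀ t ∈ Set.Ici t₀,
        HasDerivAt y (-(a t * y t ^ 2 + b t * y t + c t)) t) ∧
      ∀ t ∈ Set.Ici t₀, 0 ≤ y t := by
  have hIcc : ∀ T, Icc t₀ T ⊆ Ici t₀ := fun _ => Icc_subset_Ici_self
  obtain ⟨y, hy₀', hy⟩ := exists_forall_Ici_hasDerivWithinAt_of_forall_Icc
    (v := riccatiField a b c) (P := fun _ y => 0 ≤ y)
    (fun T hT => exists_nonneg_hasDerivWithinAt_riccatiField_Icc hT.le (ha.mono (hIcc T))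
      (hb.mono (hIcc T)) (hc.mono (hIcc T)) (fun t ht => hapos t (hIcc T ht))
      (fun t ht => hcneg t (hIcc T ht)) hy₀)
    (fun T _ _ hf hg h₀ =>
      eqOn_Icc_of_hasDerivWithinAt_riccatiField (ha.mono (hIcc T)) (hb.mono (hIcc T)) hf hg h₀)
  obtain ⟨z, hzy, hz⟩ := exists_eqOn_Ici_hasDerivAt fun t ht => (hy t ht).1
  refine ⟨z, (hzy self_mem_Ici).trans hy₀', fun t ht => ?_, fun t ht => ?_⟩
  · exact hzy ht ▸ hz t ht
  · exact hzy ht ▸ (hy t ht).2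
end

section
/- Let p, q, r be continuous on [t₀,∞) with p > 0, and let γ ∈ C¹[t₀,∞) satisfy γ'(t) + γ(t)²/p(t) + q(t)γ(t)/p(t) + r(t) ≤ 0 for all t ≥ t₀. Then η(t) := γ(t) satisfies the differential inequality η' + η²/p + qη/p + r ≤ 0, and consequently -γ is a supersolution of the reversed Riccati inequality; in particular, if additionally r(t) ≤ 0 and γ is such a subsolution, the Riccati equation α' + α²/p + qα/p + r = 0 has a solution defined on all of [t₀,∞) with α(t₀) = γ(t₀) and α(t) ≥ γ(t) for t ≥ t₀. -/
/-!
Clamp the state variable of the Riccati field to the band between `γ t` and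
`U t = γ t₀ + ∫_{t₀}^t (q² / 4p - r)`. The truncated field is bounded and uniformly Lipschitz on
compact time intervals, so Picard–Lindelöf and uniqueness give a global solution `α`.
Completing the square, `α' ≤ q² / 4p - r = U'`, so `α ≤ U`; and while `α < γ` the truncated
field equals the Riccati field at `γ`, which dominates `γ'`, so `α` cannot fall below `γ`.
Hence `α` stays in the band, where the truncation is inactive.
-/

open Set Filter
open scoped NNReal Topology

theorem exists_forall_eqOn_of_le {X Y : Type*} {s : ℕ → Set X} (g : ℕ → X → Y)
    (hg : ∀ m n, m ≤ n → EqOn (g m) (g n) (s m)) : ∃ h : X → Y, ∀ n, EqOn h (g n) (s n) := by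
  classical
  refine ⟨fun x => if hx : ∃ n, x ∈ s n then g (Nat.find hx) x else g 0 x, fun n x hx => ?_⟩
  have hx' : ∃ n, x ∈ s n := ⟨n, hx⟩
  simp only [dif_pos hx']
  exact hg _ _ (Nat.find_min' hx' hx) (Nat.find_spec hx')

section ODE

variable {E : Type*} [NormedAddCommGroup E] [NormedSpace ℝ E] [CompleteSpace E] {f : ℝ → E → E}

theorem exists_forall_mem_Icc_hasDerivWithinAt_of_lipschitzWith {a b t₀ : ℝ}
    (ht₀ : t₀ ∈ Icc a b) (x₀ : E) {K : ℝ≥0} {L : ℝ}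
    (hcont : ∀ x, ContinuousOn (f · x) (Icc a b))
    (hlip : ∀ t ∈ Icc a b, LipschitzWith K (f t))
    (hbdd : ∀ t ∈ Icc a b, ∀ x, ‖f t x‖ ≤ L) :
    ∃ α : ℝ → E, α t₀ = x₀ ∧
      ∀ t ∈ Icc a b, HasDerivWithinAt α (f t (α t)) (Icc a b) t := by
  have hpl : IsPicardLindelof f ⟨t₀, ht₀⟩ x₀ (L.toNNReal * (b - a).toNNReal) 0 L.toNNReal K :=
    { lipschitzOnWith := fun t ht => (hlip t ht).lipschitzOnWith
      continuousOn := fun x _ => hcont x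
      norm_le := fun t ht x _ => (hbdd t ht x).trans (Real.le_coe_toNNReal L)
      mul_max_le := by
        obtain ⟨ha, hb⟩ := ht₀
        rw [NNReal.coe_zero, sub_zero, NNReal.coe_mul, Real.coe_toNNReal (b - a) (by linarith)]
        gcongr
        exact max_le (by linarith) (by linarith) }
  exact hpl.exists_eq_forall_mem_Icc_hasDerivWithinAt₀

theorem exists_forall_hasDerivAt_of_lipschitzWith
    (hcont : ∀ x, Continuous (f · x))
    (hlip : ∀ a b, ∃ K, ∀ t ∈ Icc a b, LipschitzWith K (f t))
    (hbdd : ∀ a b, ∃ L, ∀ t ∈ Icc a b, ∀ x, ‖f t x‖ ≤ L) (t₀ : ℝ) (x₀ : E) :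
    ∃ α : ℝ → E, α t₀ = x₀ ∧ ∀ t, HasDerivAt α (f t (α t)) t := by
  set s : ℕ → Set ℝ := fun n => Ioo (t₀ - (n + 1)) (t₀ + (n + 1))
  have ht₀ : ∀ n, t₀ ∈ s n := fun n => ⟨by linarith, by linarith⟩
  have hloc : ∀ n : ℕ, ∃ α : ℝ → E, α t₀ = x₀ ∧ ∀ t ∈ s n, HasDerivAt α (f t (α t)) t := by
    intro n
    obtain ⟨K, hK⟩ := hlip (t₀ - (n + 1)) (t₀ + (n + 1))
    obtain ⟨L, hL⟩ := hbdd (t₀ - (n + 1)) (t₀ + (n + 1))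
    obtain ⟨α, hα₀, hα⟩ := exists_forall_mem_Icc_hasDerivWithinAt_of_lipschitzWith
      (Ioo_subset_Icc_self (ht₀ n)) x₀ (fun x => (hcont x).continuousOn) hK hL
    exact ⟨α, hα₀, fun t ht => (hα t (Ioo_subset_Icc_self ht)).hasDerivAt (Icc_mem_nhds ht.1 ht.2)⟩
  choose α hα₀ hα using hloc
  have hs : ∀ m n, m ≤ n → s m ⊆ s n := fun m n hmn =>
    Ioo_subset_Ioo (by gcongr) (by gcongr)
  obtain ⟨β, hβ⟩ := exists_forall_eqOn_of_le α fun m n hmn => by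
    obtain ⟨K, hK⟩ := hlip (t₀ - (m + 1)) (t₀ + (m + 1))
    exact ODE_solution_unique_of_mem_Ioo (s := fun _ => univ)
      (fun t ht => (hK t (Ioo_subset_Icc_self ht)).lipschitzOnWith) (ht₀ m)
      (fun t ht => ⟨hα m t ht, trivial⟩) (fun t ht => ⟨hα n t (hs m n hmn ht), trivial⟩)
      ((hα₀ m).trans (hα₀ n).symm)
  refine ⟨β, (hβ 0 (ht₀ 0)).trans (hα₀ 0), fun t => ?_⟩
  obtain ⟨n, hn⟩ := exists_nat_gt |t - t₀|
  have ht : t ∈ s n := by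
    obtain ⟨h₁, h₂⟩ := abs_lt.1 hn
    exact ⟨by linarith, by linarith⟩
  rw [hβ n ht]
  exact (hα n t ht).congr_of_eventuallyEq (eventuallyEq_of_mem (isOpen_Ioo.mem_nhds ht) (hβ n))

end ODE

theorem nonneg_of_hasDerivAt_nonneg_of_neg {φ φ' : ℝ → ℝ} {a b : ℝ}
    (hφ : ContinuousOn φ (Icc a b)) (hφ' : ∀ t ∈ Ioo a b, HasDerivAt φ (φ' t) t)
    (hneg : ∀ t ∈ Ioo a b, φ t < 0 → 0 ≤ φ' t) (ha : 0 ≤ φ a) :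
    ∀ t ∈ Icc a b, 0 ≤ φ t := by
  intro t₁ ht₁
  by_contra! hφt₁
  set E := Icc a t₁ ∩ φ ⁻¹' Ici 0
  have hbdd : BddAbove E := ⟨t₁, fun s hs => hs.1.2⟩
  have hsE : sSup E ∈ E :=
    ((hφ.mono (Icc_subset_Icc_right ht₁.2)).preimage_isClosed_of_isClosed isClosed_Icc
      isClosed_Ici).csSup_mem ⟨a, left_mem_Icc.2 ht₁.1, ha⟩ hbdd
  have hφs : 0 ≤ φ (sSup E) := hsE.2
  have hlt : sSup E < t₁ := hsE.1.2.lt_of_ne fun h => by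
    rw [h] at hφs
    linarith
  -- past the last zero of `φ` before `t₁`, `φ` is negative, hence nondecreasing
  have hneg_after : ∀ u ∈ Ioc (sSup E) t₁, φ u < 0 := fun u hu => by
    by_contra! h
    exact (le_csSup hbdd ⟨⟨hsE.1.1.trans hu.1.le, hu.2⟩, h⟩).not_gt hu.1
  have hsub : Icc (sSup E) t₁ ⊆ Icc a b := Icc_subset_Icc hsE.1.1 ht₁.2
  have hmono : MonotoneOn φ (Icc (sSup E) t₁) := by
    refine monotoneOn_of_hasDerivWithinAt_nonneg (f' := φ') (convex_Icc _ _) (hφ.mono hsub)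
      (fun u hu => ?_) fun u hu => ?_
    all_goals rw [interior_Icc] at hu
    · exact (hφ' u (Ioo_subset_Ioo hsE.1.1 ht₁.2 hu)).hasDerivWithinAt
    · exact hneg u (Ioo_subset_Ioo hsE.1.1 ht₁.2 hu) (hneg_after u ⟨hu.1, hu.2.le⟩)
  linarith [hmono (left_mem_Icc.2 hlt.le) (right_mem_Icc.2 hlt.le) hlt.le]

noncomputable def riccati (p q r : ℝ → ℝ) (t x : ℝ) : ℝ :=
  -(x ^ 2 / p t + q t * x / p t + r t)

noncomputable def clampedRiccati (p q r lo hi : ℝ → ℝ) (t x : ℝ) : ℝ :=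
  riccati p q r t (max (lo t) (min (hi t) x))

section Riccati

variable {p q r lo hi : ℝ → ℝ} {t : ℝ}

theorem riccati_le (hp : 0 < p t) (x : ℝ) : riccati p q r t x ≤ q t ^ 2 / (4 * p t) - r t := by
  have key : riccati p q r t x = q t ^ 2 / (4 * p t) - r t - (x + q t / 2) ^ 2 / p t := by
    unfold riccati
    field_simp
    ring
  rw [key]
  linarith [div_nonneg (sq_nonneg (x + q t / 2)) hp.le]

theorem abs_riccati_sub_le (hp : 0 < p t) {B x y : ℝ} (hx : |x| ≤ B) (hy : |y| ≤ B) :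
    |riccati p q r t x - riccati p q r t y| ≤ (2 * B + |q t|) / p t * |x - y| := by
  have key : riccati p q r t x - riccati p q r t y = -((x - y) * (x + y + q t)) / p t := by
    unfold riccati
    field_simp
    ring
  have hsum : |x + y + q t| ≤ 2 * B + |q t| := by
    linarith [abs_add_three x y (q t)]
  rw [key, abs_div, abs_neg, abs_mul, abs_of_pos hp, div_mul_eq_mul_div, mul_comm (|x - y|)]
  gcongr

theorem abs_riccati_le (hp : 0 < p t) {B x : ℝ} (hx : |x| ≤ B) :
    |riccati p q r t x| ≤ (B ^ 2 + |q t| * B) / p t + |r t| := by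
  have hB : 0 ≤ B := (abs_nonneg x).trans hx
  have hnum : |x ^ 2 + q t * x| ≤ B ^ 2 + |q t| * B := by
    calc |x ^ 2 + q t * x| ≤ |x| ^ 2 + |q t| * |x| := by
          rw [← abs_pow, ← abs_mul]; exact abs_add_le _ _
      _ ≤ B ^ 2 + |q t| * B := by gcongr
  calc |riccati p q r t x| = |(x ^ 2 + q t * x) / p t + r t| := by
        rw [riccati, abs_neg, add_div]
    _ ≤ |(x ^ 2 + q t * x) / p t| + |r t| := abs_add_le _ _
    _ = |x ^ 2 + q t * x| / p t + |r t| := by rw [abs_div, abs_of_pos hp]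
    _ ≤ (B ^ 2 + |q t| * B) / p t + |r t| := by gcongr

theorem clampedRiccati_of_lt {x : ℝ} (h : x < lo t) :
    clampedRiccati p q r lo hi t x = riccati p q r t (lo t) := by
  rw [clampedRiccati, max_eq_left ((min_le_right _ _).trans h.le)]

theorem clampedRiccati_of_mem {x : ℝ} (h : x ∈ Icc (lo t) (hi t)) :
    clampedRiccati p q r lo hi t x = riccati p q r t x := by
  rw [clampedRiccati, min_eq_right h.2, max_eq_right h.1]

theorem continuous_clampedRiccati (hp : Continuous p) (hq : Continuous q) (hr : Continuous r)
    (hlo : Continuous lo) (hhi : Continuous hi) (hpos : ∀ t, 0 < p t) (x : ℝ) :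
    Continuous (clampedRiccati p q r lo hi · x) := by
  have hp0 : ∀ t, p t ≠ 0 := fun t => (hpos t).ne'
  unfold clampedRiccati riccati
  fun_prop (disch := exact hp0)

theorem exists_abs_clamp_le {s : Set ℝ} (hs : IsCompact s) (hlo : ContinuousOn lo s)
    (hhi : ContinuousOn hi s) : ∃ B, ∀ t ∈ s, ∀ x, |max (lo t) (min (hi t) x)| ≤ B := by
  obtain ⟨B₁, hB₁⟩ := hs.exists_bound_of_continuousOn hlo
  obtain ⟨B₂, hB₂⟩ := hs.exists_bound_of_continuousOn hhi
  simp only [Real.norm_eq_abs] at hB₁ hB₂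
  refine ⟨max B₁ B₂, fun t ht x => abs_le.2 ⟨?_, ?_⟩⟩
  · linarith [neg_abs_le (lo t), hB₁ t ht, le_max_left B₁ B₂, le_max_left (lo t) (min (hi t) x)]
  · exact max_le_max ((le_abs_self _).trans (hB₁ t ht)) ((min_le_left _ _).trans
      ((le_abs_self _).trans (hB₂ t ht)))

theorem exists_lipschitzWith_clampedRiccati {s : Set ℝ} (hs : IsCompact s)
    (hp : ContinuousOn p s) (hq : ContinuousOn q s) (hlo : ContinuousOn lo s)
    (hhi : ContinuousOn hi s) (hpos : ∀ t ∈ s, 0 < p t) :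
    ∃ K, ∀ t ∈ s, LipschitzWith K (clampedRiccati p q r lo hi t) := by
  obtain ⟨B, hB⟩ := exists_abs_clamp_le hs hlo hhi
  have hcont : ContinuousOn (fun t => (2 * B + |q t|) / p t) s :=
    (continuousOn_const.add hq.abs).div hp fun t ht => (hpos t ht).ne'
  obtain ⟨C, hC⟩ := hs.exists_bound_of_continuousOn hcont
  refine ⟨C.toNNReal, fun t ht => LipschitzWith.of_dist_le' fun x y => ?_⟩
  have hclamp : |max (lo t) (min (hi t) x) - max (lo t) (min (hi t) y)| ≤ |x - y| := by
    simpa [Real.dist_eq] using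
      ((LipschitzWith.id.const_min (hi t)).const_max (lo t)).dist_le_mul x y
  have hCt : (2 * B + |q t|) / p t ≤ C := (le_abs_self _).trans (hC t ht)
  rw [Real.dist_eq, Real.dist_eq]
  exact (abs_riccati_sub_le (hpos t ht) (hB t ht x) (hB t ht y)).trans
    (mul_le_mul hCt hclamp (abs_nonneg _) ((norm_nonneg _).trans (hC t ht)))

theorem exists_abs_clampedRiccati_le {s : Set ℝ} (hs : IsCompact s)
    (hp : ContinuousOn p s) (hq : ContinuousOn q s) (hr : ContinuousOn r s)
    (hlo : ContinuousOn lo s) (hhi : ContinuousOn hi s) (hpos : ∀ t ∈ s, 0 < p t) :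
    ∃ L, ∀ t ∈ s, ∀ x, |clampedRiccati p q r lo hi t x| ≤ L := by
  obtain ⟨B, hB⟩ := exists_abs_clamp_le hs hlo hhi
  have hcont : ContinuousOn (fun t => (B ^ 2 + |q t| * B) / p t + |r t|) s :=
    ((continuousOn_const.add (hq.abs.mul continuousOn_const)).div hp
      fun t ht => (hpos t ht).ne').add hr.abs
  obtain ⟨L, hL⟩ := hs.exists_bound_of_continuousOn hcont
  exact ⟨L, fun t ht x => (abs_riccati_le (hpos t ht) (hB t ht x)).trans
    ((le_abs_self _).trans (hL t ht))⟩

end Riccati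

theorem clampedRiccati_mem_Icc {p q r lo lo' hi hi' α : ℝ → ℝ} {a b : ℝ}
    (hlo : ContinuousOn lo (Icc a b)) (hlo' : ∀ t ∈ Ioo a b, HasDerivAt lo (lo' t) t)
    (hsub : ∀ t ∈ Ioo a b, lo' t ≤ riccati p q r t (lo t))
    (hhi : ContinuousOn hi (Icc a b)) (hhi' : ∀ t ∈ Ioo a b, HasDerivAt hi (hi' t) t)
    (hsup : ∀ t ∈ Ioo a b, ∀ x, riccati p q r t x ≤ hi' t)
    (hα : ContinuousOn α (Icc a b))
    (hα' : ∀ t ∈ Ioo a b, HasDerivAt α (clampedRiccati p q r lo hi t (α t)) t)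
    (ha : α a ∈ Icc (lo a) (hi a)) :
    ∀ t ∈ Icc a b, α t ∈ Icc (lo t) (hi t) := by
  have hlower := nonneg_of_hasDerivAt_nonneg_of_neg (hα.sub hlo)
    (fun t ht => (hα' t ht).sub (hlo' t ht))
    (fun t ht hneg => by
      rw [clampedRiccati_of_lt (sub_neg.1 hneg)]
      linarith [hsub t ht])
    (sub_nonneg.2 ha.1)
  have hupper : MonotoneOn (fun t => hi t - α t) (Icc a b) := by
    refine monotoneOn_of_hasDerivWithinAt_nonneg
      (f' := fun t => hi' t - clampedRiccati p q r lo hi t (α t)) (convex_Icc _ _) (hhi.sub hα)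
      (fun t ht => ?_) fun t ht => ?_
    all_goals rw [interior_Icc] at ht
    · exact ((hhi' t ht).sub (hα' t ht)).hasDerivWithinAt
    · exact sub_nonneg.2 (hsup t ht _)
  intro t ht
  have h₁ : 0 ≤ α t - lo t := hlower t ht
  have h₂ : hi a - α a ≤ hi t - α t := hupper (left_mem_Icc.2 (ht.1.trans ht.2)) ht ht.1
  exact ⟨by linarith, by linarith [ha.2]⟩

theorem exists_forall_hasDerivAt_clampedRiccati {p q r lo hi : ℝ → ℝ} (hp : Continuous p)
    (hq : Continuous q) (hr : Continuous r) (hlo : Continuous lo) (hhi : Continuous hi)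
    (hpos : ∀ t, 0 < p t) (t₀ x₀ : ℝ) :
    ∃ α : ℝ → ℝ, α t₀ = x₀ ∧ ∀ t, HasDerivAt α (clampedRiccati p q r lo hi t (α t)) t :=
  exists_forall_hasDerivAt_of_lipschitzWith (continuous_clampedRiccati hp hq hr hlo hhi hpos)
    (fun _ _ => exists_lipschitzWith_clampedRiccati isCompact_Icc hp.continuousOn
      hq.continuousOn hlo.continuousOn hhi.continuousOn fun t _ => hpos t)
    (fun _ _ => exists_abs_clampedRiccati_le isCompact_Icc hp.continuousOn hq.continuousOn
      hr.continuousOn hlo.continuousOn hhi.continuousOn fun t _ => hpos t) t₀ x₀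

theorem exists_riccati_solution_ge {p q r γ γ' : ℝ → ℝ} {t₀ : ℝ} (hp : Continuous p)
    (hq : Continuous q) (hr : Continuous r) (hpos : ∀ t, 0 < p t) (hγ : Continuous γ)
    (hγ' : ∀ t ∈ Ioi t₀, HasDerivAt γ (γ' t) t)
    (hsub : ∀ t ∈ Ioi t₀, γ' t ≤ riccati p q r t (γ t)) :
    ∃ α : ℝ → ℝ, α t₀ = γ t₀ ∧
      ∀ t ∈ Ici t₀, HasDerivAt α (riccati p q r t (α t)) t ∧ γ t ≤ α t := by
  set m : ℝ → ℝ := fun t => q t ^ 2 / (4 * p t) - r t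
  have hm : Continuous m :=
    ((hq.pow 2).div (continuous_const.mul hp) fun t => (mul_pos four_pos (hpos t)).ne').sub hr
  set U : ℝ → ℝ := fun t => γ t₀ + ∫ s in t₀..t, m s
  have hU : ∀ t, HasDerivAt U (m t) t := fun t =>
    (hm.integral_hasStrictDerivAt t₀ t).hasDerivAt.const_add _
  obtain ⟨α, hα₀, hα⟩ := exists_forall_hasDerivAt_clampedRiccati hp hq hr hγ
    (continuous_iff_continuousAt.2 fun t => (hU t).continuousAt) hpos t₀ (γ t₀)
  have hmem : ∀ t ∈ Ici t₀, α t ∈ Icc (γ t) (U t) := fun t ht =>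
    clampedRiccati_mem_Icc hγ.continuousOn (fun s hs => hγ' s hs.1) (fun s hs => hsub s hs.1)
      (HasDerivAt.continuousOn fun s _ => hU s) (fun s _ => hU s)
      (fun s _ => riccati_le (hpos s)) (HasDerivAt.continuousOn fun s _ => hα s)
      (fun s _ => hα s) (by simp [U, hα₀]) t (right_mem_Icc.2 ht)
  exact ⟨α, hα₀, fun t ht => ⟨clampedRiccati_of_mem (hmem t ht) ▸ hα t, (hmem t ht).1⟩⟩

theorem riccati_subsolution_global_existence_general
    (t₀ : ℝ) (p q r γ γ' : ℝ → ℝ)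
    (hp : ContinuousOn p (Set.Ici t₀)) (hq : ContinuousOn q (Set.Ici t₀))
    (hr : ContinuousOn r (Set.Ici t₀))
    (hppos : ∀ t ∈ Set.Ici t₀, 0 < p t)
    (hγ : ∀ t ∈ Set.Ici t₀, HasDerivAt γ (γ' t) t)
    (hsub : ∀ t ∈ Set.Ici t₀,
      γ' t + γ t ^ 2 / p t + q t * γ t / p t + r t ≤ 0) :
    ∃ α : ℝ → ℝ, α t₀ = γ t₀ ∧
      (∀ t ∈ Set.Ici t₀,
        HasDerivAt α (-(α t ^ 2 / p t + q t * α t / p t + r t)) t) ∧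
      ∀ t ∈ Set.Ici t₀, γ t ≤ α t := by
  -- freezing all data at their value at `t₀` to the left of `t₀` makes the derivative at `t₀`
  -- a two-sided one
  have hmax : ∀ t, max t₀ t ∈ Ici t₀ := fun t => le_max_left t₀ t
  have hext : ∀ f : ℝ → ℝ, ContinuousOn f (Ici t₀) → Continuous (f ∘ max t₀) := fun f hf =>
    hf.comp_continuous (continuous_const.max continuous_id) hmax
  have hext_eq : ∀ f : ℝ → ℝ, ∀ t ∈ Ici t₀, (f ∘ max t₀) t = f t := fun f t ht =>
    congrArg f (max_eq_right ht)
  have hriccati : ∀ t ∈ Ici t₀, ∀ x,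
      riccati (p ∘ max t₀) (q ∘ max t₀) (r ∘ max t₀) t x = riccati p q r t x := by
    intro t ht x
    simp only [riccati, hext_eq _ t ht]
  obtain ⟨α, hα₀, hα⟩ := exists_riccati_solution_ge (γ' := γ') (hext p hp) (hext q hq) (hext r hr)
    (fun t => hppos _ (hmax t)) (hext γ fun t ht => (hγ t ht).continuousAt.continuousWithinAt)
    (fun t ht => (hγ t (Ioi_subset_Ici_self ht)).congr_of_eventuallyEq
      (eventuallyEq_of_mem (Ioi_mem_nhds ht) fun s hs => hext_eq γ s (Ioi_subset_Ici_self hs)))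
    (fun t ht => by
      have ht' := Ioi_subset_Ici_self ht
      rw [hriccati t ht', hext_eq γ t ht', riccati]
      linarith [hsub t ht'])
  refine ⟨α, by rwa [hext_eq γ t₀ self_mem_Ici] at hα₀, fun t ht => ?_, fun t ht => ?_⟩
  · have := (hα t ht).1
    rwa [hriccati t ht] at this
  · exact hext_eq γ t ht ▸ (hα t ht).2

theorem riccati_subsolution_global_existence
    (t₀ : ℝ) (p q r γ γ' : ℝ → ℝ)
    (hp : ContinuousOn p (Set.Ici t₀)) (hq : ContinuousOn q (Set.Ici t₀))
    (hr : ContinuousOn r (Set.Ici t₀))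
    (hppos : ∀ t ∈ Set.Ici t₀, 0 < p t)
    (hγ : ∀ t ∈ Set.Ici t₀, HasDerivAt γ (γ' t) t)
    (hγ' : ContinuousOn γ' (Set.Ici t₀))
    (hsub : ∀ t ∈ Set.Ici t₀,
      γ' t + γ t ^ 2 / p t + q t * γ t / p t + r t ≤ 0)
    (hrneg : ∀ t ∈ Set.Ici t₀, r t ≤ 0) :
    ∃ α : ℝ → ℝ, α t₀ = γ t₀ ∧
      (∀ t ∈ Set.Ici t₀,
        HasDerivAt α (-(α t ^ 2 / p t + q t * α t / p t + r t)) t) ∧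
      ∀ t ∈ Set.Ici t₀, γ t ≤ α t :=
  riccati_subsolution_global_existence_general t₀ p q r γ γ' hp hq hr hppos hγ hsub
end

section
/- Let p, q be continuous on [t₀,∞) with p > 0, and suppose ∫_{t₀}^∞ exp(-∫_{t₀}^τ q(s)/p(s) ds)/p(τ) dτ = ∞. Let α₀ > 0 and let α̃ be the explicit positive solution of α' + α²/p + qα/p = 0 with α̃(t₀) = α₀. Then ∫_{t₀}^∞ α̃(τ)/p(τ) dτ = ∞. -/
/-! Writing `E t = ∫_{t₀}^t e^{-∫ q/p}/p`, the explicit solution satisfies `α̃/p = α₀ E' / (1 + α₀ E)`,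
so `∫_{t₀}^t α̃/p = log (1 + α₀ E t)`, which tends to `∞` together with `E`. -/

open MeasureTheory Set Filter

section Primitive

variable {f : ℝ → ℝ} {a b : ℝ}

theorem continuousOn_integral_of_continuousOn_Icc (hab : a ≤ b) (hf : ContinuousOn f (Icc a b)) :
    ContinuousOn (fun x => ∫ t in a..x, f t) (Icc a b) := by
  have hf' : IntegrableOn f (uIcc a b) volume := by
    simpa only [uIcc_of_le hab] using hf.integrableOn_Icc
  simpa only [uIcc_of_le hab] using intervalIntegral.continuousOn_primitive_interval hf'

theorem hasDerivAt_integral_of_continuousOn_Icc (hf : ContinuousOn f (Icc a b)) {x : ℝ}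
    (hx : x ∈ Ioo a b) : HasDerivAt (fun u => ∫ t in a..u, f t) (f x) x := by
  have hf' : ContinuousOn f (Ioo a b) := hf.mono Ioo_subset_Icc_self
  refine intervalIntegral.integral_hasDerivAt_right ?_
    (hf'.stronglyMeasurableAtFilter isOpen_Ioo x hx) (hf'.continuousAt (isOpen_Ioo.mem_nhds hx))
  exact (hf.mono (uIcc_of_le hx.1.le ▸ Icc_subset_Icc_right hx.2.le)).intervalIntegrable

theorem integral_mul_div_one_add_mul_primitive (hab : a ≤ b) (hf : ContinuousOn f (Icc a b))
    {c : ℝ} (hpos : ∀ x ∈ Icc a b, 0 < 1 + c * ∫ t in a..x, f t) :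
    ∫ x in a..b, c * f x / (1 + c * ∫ t in a..x, f t) =
      Real.log (1 + c * ∫ t in a..b, f t) := by
  have hden : ContinuousOn (fun x => 1 + c * ∫ t in a..x, f t) (Icc a b) :=
    continuousOn_const.add
      (continuousOn_const.mul (continuousOn_integral_of_continuousOn_Icc hab hf))
  have hne : ∀ x ∈ Icc a b, 1 + c * ∫ t in a..x, f t ≠ 0 := fun x hx => (hpos x hx).ne'
  have hderiv : ∀ x ∈ Ioo a b, HasDerivAt (fun u => Real.log (1 + c * ∫ t in a..u, f t))
      (c * f x / (1 + c * ∫ t in a..x, f t)) x := fun x hx =>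
    (((hasDerivAt_integral_of_continuousOn_Icc hf hx).const_mul c).const_add 1).log
      (hne x (Ioo_subset_Icc_self hx))
  rw [intervalIntegral.integral_eq_sub_of_hasDerivAt_of_le hab (hden.log hne) hderiv
    (ContinuousOn.intervalIntegrable_of_Icc hab
      ((continuousOn_const.mul hf).div hden hne :
        ContinuousOn (fun x => c * f x / (1 + c * ∫ t in a..x, f t)) (Icc a b)))]
  simp

end Primitive

theorem explicit_solution_integral_divergence
    (t₀ : ℝ) (p q : ℝ → ℝ) (α₀ : ℝ)
    (hp : ContinuousOn p (Set.Ici t₀)) (hq : ContinuousOn q (Set.Ici t₀))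
    (hppos : ∀ t ∈ Set.Ici t₀, 0 < p t) (hα₀ : 0 < α₀)
    (hdiv : Filter.Tendsto
      (fun t => ∫ τ in t₀..t, Real.exp (-∫ s in t₀..τ, q s / p s) / p τ)
      Filter.atTop Filter.atTop) :
    let αt : ℝ → ℝ := fun t =>
      α₀ * Real.exp (-∫ ζ in t₀..t, q ζ / p ζ) /
        (1 + α₀ * ∫ ξ in t₀..t, Real.exp (-∫ ζ in t₀..ξ, q ζ / p ζ) / p ξ)
    Filter.Tendsto (fun t => ∫ τ in t₀..t, αt τ / p τ)
      Filter.atTop Filter.atTop := by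
  intro αt
  set g : ℝ → ℝ := fun τ => Real.exp (-∫ s in t₀..τ, q s / p s) / p τ
  have hαt : (fun τ => αt τ / p τ) = fun τ => α₀ * g τ / (1 + α₀ * ∫ ξ in t₀..τ, g ξ) := by
    funext τ
    simp only [αt, g]
    ring
  have hg_cont : ∀ t ≥ t₀, ContinuousOn g (Icc t₀ t) := fun t ht =>
    have hp' := hp.mono Icc_subset_Ici_self
    have hpne : ∀ x ∈ Icc t₀ t, p x ≠ 0 := fun x hx => (hppos x hx.1).ne'
    (continuousOn_integral_of_continuousOn_Icc ht
      ((hq.mono Icc_subset_Ici_self).div hp' hpne)).neg.rexp.div hp' hpne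
  have hg_pos : ∀ t ∈ Ici t₀, 0 < g t := fun t ht => div_pos (Real.exp_pos _) (hppos t ht)
  have hlog : ∀ t ≥ t₀, ∫ τ in t₀..t, αt τ / p τ = Real.log (1 + α₀ * ∫ ξ in t₀..t, g ξ) := by
    intro t ht
    rw [hαt]
    refine integral_mul_div_one_add_mul_primitive ht (hg_cont t ht) ?_
    intro x hx
    have : 0 ≤ ∫ ξ in t₀..x, g ξ :=
      intervalIntegral.integral_nonneg hx.1 fun u hu => (hg_pos u hu.1).le
    positivity
  refine (Real.tendsto_log_atTop.comp (tendsto_atTop_add_const_left _ 1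
    (hdiv.const_mul_atTop hα₀))).congr' ?_
  filter_upwards [eventually_ge_atTop t₀] with t ht
  exact (hlog t ht).symm
end

section
/- Let p, q, r be continuous on [t₀,∞) with p > 0 and r(t) ≤ 0 for all t ≥ t₀, and let α be the solution of the Riccati equation α'(t) + α(t)²/p(t) + q(t)α(t)/p(t) + r(t) = 0 with initial condition α(t₀) = α₀ ≥ 0. Then α exists on all of [t₀,∞) and α(t) ≥ 0 for all t ≥ t₀; moreover α(t) ≥ α₁(t) where α₁ is the explicit solution of α' + α²/p + qα/p = 0 with α₁(t₀) = α₀. -/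
/-!
With `Φ = ∫ q/p`, the substitution `α = w e^{-Φ} / u` turns the Riccati equation into the linear
system `u' = k w`, `w' = m u` with `k = e^{-Φ}/p ≥ 0` and `m = -r e^{Φ} ≥ 0`. Linear equations with
continuous coefficients have global solutions (the Picard series converges on every bounded
interval), and since the system is cooperative, `u` stays positive for `t ≥ t₀`, so `α` exists on
all of `[t₀, ∞)`. The explicit solution `α₁` is the case `m = 0`, i.e. `w₁ = α₀` and
`u₁ = 1 + α₀ ∫ k`; the Wronskian-type quantity `w u₁ - α₀ u` vanishes at `t₀` and has derivative
`m u u₁ ≥ 0`, whence `α ≥ α₁ ≥ 0`.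
-/

open MeasureTheory Set intervalIntegral Interval

section PicardSeries

variable {E : Type*} [NormedAddCommGroup E] [NormedSpace ℝ E]

noncomputable def picardTerm (A : ℝ → E →L[ℝ] E) (t₀ : ℝ) (x₀ : E) : ℕ → ℝ → E
  | 0 => fun _ => x₀
  | n + 1 => fun t => ∫ s in t₀..t, A s (picardTerm A t₀ x₀ n s)

variable {A : ℝ → E →L[ℝ] E} {t₀ : ℝ} {x₀ : E}

theorem continuous_picardTerm (hA : Continuous A) (n : ℕ) : Continuous (picardTerm A t₀ x₀ n) := by
  induction n with
  | zero => exact continuous_const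
  | succ n ih => exact continuous_primitive (fun a b => (hA.clm_apply ih).intervalIntegrable a b) t₀

theorem hasDerivAt_picardTerm_succ [CompleteSpace E] (hA : Continuous A) (n : ℕ) (t : ℝ) :
    HasDerivAt (picardTerm A t₀ x₀ (n + 1)) (A t (picardTerm A t₀ x₀ n t)) t :=
  have hc := hA.clm_apply (continuous_picardTerm (x₀ := x₀) (t₀ := t₀) hA n)
  integral_hasDerivAt_right (hc.intervalIntegrable _ _) (hc.stronglyMeasurableAtFilter _ _)
    hc.continuousAt

theorem norm_picardTerm_le {M : ℝ} (hM : 0 ≤ M) (n : ℕ) {t : ℝ}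
    (hAt : ∀ s ∈ uIcc t₀ t, ‖A s‖ ≤ M) :
    ‖picardTerm A t₀ x₀ n t‖ ≤ ‖x₀‖ * (M * |t - t₀|) ^ n / n.factorial := by
  induction n generalizing t with
  | zero => simp [picardTerm]
  | succ n ih =>
    have hterm : ∀ s ∈ uIcc t₀ t, ‖A s (picardTerm A t₀ x₀ n s)‖ ≤
        ‖x₀‖ * M ^ (n + 1) / n.factorial * |s - t₀| ^ n := fun s hs =>
      calc ‖A s (picardTerm A t₀ x₀ n s)‖ ≤ ‖A s‖ * ‖picardTerm A t₀ x₀ n s‖ := (A s).le_opNorm _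
        _ ≤ M * (‖x₀‖ * (M * |s - t₀|) ^ n / n.factorial) :=
          mul_le_mul (hAt s hs) (ih fun r hr => hAt r (uIcc_subset_uIcc_left hs hr))
            (norm_nonneg _) hM
        _ = _ := by ring
    calc ‖picardTerm A t₀ x₀ (n + 1) t‖
        = ‖∫ s in Ι t₀ t, A s (picardTerm A t₀ x₀ n s)‖ := norm_integral_eq_norm_integral_uIoc _
      _ ≤ ∫ s in Ι t₀ t, ‖x₀‖ * M ^ (n + 1) / n.factorial * |s - t₀| ^ n :=
          norm_integral_le_of_norm_le (Continuous.integrableOn_uIoc (by fun_prop))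
            ((ae_restrict_mem measurableSet_uIoc).mono fun s hs => hterm s (uIoc_subset_uIcc hs))
      _ = ‖x₀‖ * (M * |t - t₀|) ^ (n + 1) / (n + 1).factorial := by
          rw [MeasureTheory.integral_const_mul, integral_pow_abs_sub_uIoc, Nat.factorial_succ]
          push_cast
          field_simp
          ring

theorem exists_summable_bound_picardTerm (hA : Continuous A) {a b : ℝ} (ht₀ : t₀ ∈ Icc a b) :
    ∃ M : ℝ, ∃ u : ℕ → ℝ, Summable u ∧ (∀ s ∈ Icc a b, ‖A s‖ ≤ M) ∧
      ∀ n, ∀ t ∈ Icc a b, ‖picardTerm A t₀ x₀ n t‖ ≤ u n := by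
  obtain ⟨M, hM⟩ := isCompact_Icc.exists_bound_of_continuousOn (hA.continuousOn (s := Icc a b))
  have hM₀ : 0 ≤ M := (norm_nonneg _).trans (hM t₀ ht₀)
  refine ⟨M, fun n => ‖x₀‖ * (M * (b - a)) ^ n / n.factorial, ?_, hM, fun n t ht => ?_⟩
  · simpa only [mul_div_assoc] using (Real.summable_pow_div_factorial _).mul_left ‖x₀‖
  · have hdist : |t - t₀| ≤ b - a :=
      abs_sub_le_iff.2 ⟨by linarith [ht.2, ht₀.1], by linarith [ht.1, ht₀.2]⟩
    refine (norm_picardTerm_le hM₀ n fun s hs => hM s (uIcc_subset_Icc ht₀ ht hs)).trans ?_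
    dsimp only
    gcongr

end PicardSeries

theorem exists_hasDerivAt_linear {E : Type*} [NormedAddCommGroup E] [NormedSpace ℝ E]
    [CompleteSpace E] {A : ℝ → E →L[ℝ] E} (hA : Continuous A) (t₀ : ℝ) (x₀ : E) :
    ∃ x : ℝ → E, x t₀ = x₀ ∧ ∀ t, HasDerivAt x (A t (x t)) t := by
  refine ⟨fun t => x₀ + ∑' n, picardTerm A t₀ x₀ (n + 1) t, by simp [picardTerm], fun t => ?_⟩
  have hU : ∀ s ∈ uIcc t t₀, s ∈ Ioo (min t t₀ - 1) (max t t₀ + 1) := fun s hs =>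
    ⟨by linarith [hs.1], by linarith [hs.2]⟩
  obtain ⟨M, u, hu, hM, hbound⟩ := exists_summable_bound_picardTerm (t₀ := t₀) (x₀ := x₀) hA
    (Ioo_subset_Icc_self (hU t₀ right_mem_uIcc))
  have hM₀ : 0 ≤ M := (norm_nonneg _).trans (hM t₀ (Ioo_subset_Icc_self (hU t₀ right_mem_uIcc)))
  have hderiv := hasDerivAt_tsum_of_isPreconnected (hu.mul_left M) isOpen_Ioo isPreconnected_Ioo
    (fun n y _ => hasDerivAt_picardTerm_succ hA n y)
    (fun n y hy => ((A y).le_opNorm _).trans <| mul_le_mul (hM y (Ioo_subset_Icc_self hy))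
      (hbound n y (Ioo_subset_Icc_self hy)) (norm_nonneg _) hM₀)
    (hU t₀ right_mem_uIcc) (by simp [picardTerm]) (hU t left_mem_uIcc)
  have hsum : Summable fun n => picardTerm A t₀ x₀ n t :=
    .of_norm_bounded hu fun n => hbound n t (Ioo_subset_Icc_self (hU t left_mem_uIcc))
  convert hderiv.const_add x₀ using 1
  rw [← (A t).map_tsum hsum, hsum.tsum_eq_zero_add]
  rfl

theorem exists_hasDerivAt_antidiagonal_system {k m : ℝ → ℝ} (hk : Continuous k) (hm : Continuous m)
    (t₀ u₀ w₀ : ℝ) :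
    ∃ u w : ℝ → ℝ, u t₀ = u₀ ∧ w t₀ = w₀ ∧
      ∀ t, HasDerivAt u (k t * w t) t ∧ HasDerivAt w (m t * u t) t := by
  let A : ℝ → ℝ × ℝ →L[ℝ] ℝ × ℝ := fun t =>
    k t • (ContinuousLinearMap.inl ℝ ℝ ℝ).comp (ContinuousLinearMap.snd ℝ ℝ ℝ) +
      m t • (ContinuousLinearMap.inr ℝ ℝ ℝ).comp (ContinuousLinearMap.fst ℝ ℝ ℝ)
  obtain ⟨x, hx₀, hx⟩ := exists_hasDerivAt_linear
    ((hk.smul continuous_const).add (hm.smul continuous_const) : Continuous A) t₀ (u₀, w₀)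
  refine ⟨fun t => (x t).1, fun t => (x t).2, by simp [hx₀], by simp [hx₀], fun t => ⟨?_, ?_⟩⟩
  · simpa [A, Function.comp_def] using
      (ContinuousLinearMap.fst ℝ ℝ ℝ).hasFDerivAt.comp_hasDerivAt t (hx t)
  · simpa [A, Function.comp_def] using
      (ContinuousLinearMap.snd ℝ ℝ ℝ).hasFDerivAt.comp_hasDerivAt t (hx t)

theorem le_of_hasDerivAt_nonneg {f f' : ℝ → ℝ} {a b : ℝ} (hab : a ≤ b)
    (hf : ∀ t ∈ Icc a b, HasDerivAt f (f' t) t) (hf' : ∀ t ∈ Ioo a b, 0 ≤ f' t) : f a ≤ f b :=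
  monotoneOn_of_hasDerivWithinAt_nonneg (convex_Icc a b)
    (fun t ht => (hf t ht).continuousAt.continuousWithinAt)
    (fun t ht => (hf t (interior_subset ht)).hasDerivWithinAt)
    (fun t ht => hf' t (by rwa [interior_Icc] at ht)) (left_mem_Icc.2 hab) (right_mem_Icc.2 hab) hab

theorem ContinuousOn.pos_of_forall_pos_on_Ico {f : ℝ → ℝ} {a : ℝ} (hf : ContinuousOn f (Ici a))
    (ha : 0 < f a) (h : ∀ T > a, (∀ s ∈ Ico a T, 0 < f s) → 0 < f T) : ∀ t ∈ Ici a, 0 < f t := by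
  by_contra! hneg
  set Z := Ici a ∩ f ⁻¹' Iic 0
  have hZ : IsClosed Z := hf.preimage_isClosed_of_isClosed isClosed_Ici isClosed_Iic
  have hZa : BddBelow Z := ⟨a, fun s hs => hs.1⟩
  have hT : sInf Z ∈ Z := hZ.csInf_mem hneg hZa
  have hTa : a < sInf Z := hT.1.lt_of_ne fun h => (show f a ≤ 0 from h ▸ hT.2).not_gt ha
  refine (h _ hTa fun s hs => ?_).not_ge hT.2
  by_contra! hfs
  exact hs.2.not_ge (csInf_le hZa ⟨hs.1, hfs⟩)

section Cooperative

variable {k m u w : ℝ → ℝ} {t₀ : ℝ}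

theorem pos_of_hasDerivAt_cooperative (hk : ∀ t ∈ Ici t₀, 0 ≤ k t) (hm : ∀ t ∈ Ici t₀, 0 ≤ m t)
    (hu : ∀ t ∈ Ici t₀, HasDerivAt u (k t * w t) t) (hw : ∀ t ∈ Ici t₀, HasDerivAt w (m t * u t) t)
    (hu₀ : 0 < u t₀) (hw₀ : 0 ≤ w t₀) : ∀ t ∈ Ici t₀, 0 < u t := by
  refine ContinuousOn.pos_of_forall_pos_on_Ico
    (fun t ht => (hu t ht).continuousAt.continuousWithinAt) hu₀ fun T hT hpos => ?_
  have hw_nonneg : ∀ s ∈ Icc t₀ T, 0 ≤ w s := fun s hs =>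
    hw₀.trans <| le_of_hasDerivAt_nonneg hs.1 (fun r hr => hw r hr.1) fun r hr =>
      mul_nonneg (hm r hr.1.le) (hpos r ⟨hr.1.le, hr.2.trans_le hs.2⟩).le
  exact hu₀.trans_le <| le_of_hasDerivAt_nonneg hT.le (fun r hr => hu r hr.1) fun r hr =>
    mul_nonneg (hk r hr.1.le) (hw_nonneg r (Ioo_subset_Icc_self hr))

theorem div_one_add_integral_le_div_of_hasDerivAt_cooperative (hkc : Continuous k)
    (hk : ∀ t ∈ Ici t₀, 0 ≤ k t) (hm : ∀ t ∈ Ici t₀, 0 ≤ m t)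
    (hu : ∀ t ∈ Ici t₀, HasDerivAt u (k t * w t) t) (hw : ∀ t ∈ Ici t₀, HasDerivAt w (m t * u t) t)
    {c : ℝ} (hc : 0 ≤ c) (hu₀ : u t₀ = 1) (hw₀ : w t₀ = c) :
    ∀ t ∈ Ici t₀, c / (1 + c * ∫ s in t₀..t, k s) ≤ w t / u t := by
  intro t ht
  have hu_pos := pos_of_hasDerivAt_cooperative hk hm hu hw (hu₀ ▸ one_pos) (hw₀ ▸ hc)
  have hv : ∀ r, HasDerivAt (fun r => 1 + c * ∫ s in t₀..r, k s) (c * k r) r := fun r =>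
    ((integral_hasDerivAt_right (hkc.intervalIntegrable _ _) (hkc.stronglyMeasurableAtFilter _ _)
      hkc.continuousAt).const_mul c).const_add 1
  have hv_pos : ∀ r ∈ Ici t₀, 0 < 1 + c * ∫ s in t₀..r, k s := fun r hr => by
    have : 0 ≤ ∫ s in t₀..r, k s := integral_nonneg hr fun s hs => hk s hs.1
    positivity
  have hwronski := le_of_hasDerivAt_nonneg ht
    (f := fun r => w r * (1 + c * ∫ s in t₀..r, k s) - c * u r)
    (fun r hr => ((hw r hr.1).mul (hv r)).sub ((hu r hr.1).const_mul c)) fun r hr => by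
      refine (mul_nonneg (mul_nonneg (hm r hr.1.le) (hu_pos r hr.1.le).le)
        (hv_pos r hr.1.le).le).trans_eq ?_
      ring
  simp only [hu₀, hw₀, integral_same, mul_zero, add_zero, mul_one, sub_self] at hwronski
  rw [div_le_div_iff₀ (hv_pos t ht) (hu_pos t ht)]
  linarith

end Cooperative

theorem exists_riccati_solution_ge_s18 {P Q R : ℝ → ℝ} (hP : Continuous P) (hQ : Continuous Q)
    (hR : Continuous R) (hP_pos : ∀ t, 0 < P t) {t₀ : ℝ} (hR_nonpos : ∀ t ∈ Ici t₀, R t ≤ 0)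
    {α₀ : ℝ} (hα₀ : 0 ≤ α₀) :
    ∃ α : ℝ → ℝ, α t₀ = α₀ ∧
      (∀ t ∈ Ici t₀, HasDerivAt α (-(α t ^ 2 / P t + Q t * α t / P t + R t)) t) ∧
      ∀ t ∈ Ici t₀, α₀ * Real.exp (-∫ s in t₀..t, Q s / P s) /
        (1 + α₀ * ∫ τ in t₀..t, Real.exp (-∫ s in t₀..τ, Q s / P s) / P τ) ≤ α t := by
  set Φ := fun t => ∫ s in t₀..t, Q s / P s
  have hQP : Continuous fun s => Q s / P s := hQ.div hP fun s => (hP_pos s).ne'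
  have hΦ : ∀ t, HasDerivAt Φ (Q t / P t) t := fun t =>
    integral_hasDerivAt_right (hQP.intervalIntegrable _ _) (hQP.stronglyMeasurableAtFilter _ _)
      hQP.continuousAt
  have hΦc : Continuous Φ := continuous_iff_continuousAt.2 fun t => (hΦ t).continuousAt
  set k := fun t => Real.exp (-Φ t) / P t
  set m := fun t => -R t * Real.exp (Φ t)
  have hkc : Continuous k := (Real.continuous_exp.comp hΦc.neg).div hP fun s => (hP_pos s).ne'
  have hk : ∀ t ∈ Ici t₀, 0 ≤ k t := fun t _ => div_nonneg (Real.exp_pos _).le (hP_pos t).le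
  have hm : ∀ t ∈ Ici t₀, 0 ≤ m t := fun t ht =>
    mul_nonneg (neg_nonneg.2 (hR_nonpos t ht)) (Real.exp_pos _).le
  have hmc : Continuous m := hR.neg.mul (Real.continuous_exp.comp hΦc)
  obtain ⟨u, w, hu₀, hw₀, huw⟩ := exists_hasDerivAt_antidiagonal_system hkc hmc t₀ 1 α₀
  have hu_pos := pos_of_hasDerivAt_cooperative hk hm (fun t _ => (huw t).1) (fun t _ => (huw t).2)
    (hu₀ ▸ one_pos) (hw₀ ▸ hα₀)
  refine ⟨fun t => w t * Real.exp (-Φ t) / u t, by simp [Φ, hu₀, hw₀], fun t ht => ?_,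
    fun t ht => ?_⟩
  · refine (((huw t).2.mul (hΦ t).neg.exp).div (huw t).1 (hu_pos t ht).ne').congr_deriv ?_
    have := (hP_pos t).ne'
    have := (hu_pos t ht).ne'
    simp only [k, m, Pi.mul_apply, Pi.neg_apply, Real.exp_neg]
    field_simp
    ring
  · have hcmp := div_one_add_integral_le_div_of_hasDerivAt_cooperative hkc hk hm
      (fun t _ => (huw t).1) (fun t _ => (huw t).2) hα₀ hu₀ hw₀ t ht
    show α₀ * Real.exp (-Φ t) / (1 + α₀ * ∫ s in t₀..t, k s) ≤ w t * Real.exp (-Φ t) / u t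
    rw [mul_div_right_comm, mul_div_right_comm (w t)]
    exact mul_le_mul_of_nonneg_right hcmp (Real.exp_pos _).le

theorem ContinuousOn.continuous_comp_max_const {β : Type*} [TopologicalSpace β] {f : ℝ → β}
    {a : ℝ} (hf : ContinuousOn f (Ici a)) : Continuous fun t => f (max t a) :=
  hf.comp_continuous (continuous_id.max continuous_const) fun t => le_max_right t a

theorem riccati_nonpositive_r_existence_comparison
    (t₀ : ℝ) (p q r : ℝ → ℝ) (α₀ : ℝ)
    (hp : ContinuousOn p (Set.Ici t₀)) (hq : ContinuousOn q (Set.Ici t₀))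
    (hr : ContinuousOn r (Set.Ici t₀))
    (hppos : ∀ t ∈ Set.Ici t₀, 0 < p t)
    (hrneg : ∀ t ∈ Set.Ici t₀, r t ≤ 0)
    (hα₀ : 0 ≤ α₀) :
    ∃ α : ℝ → ℝ, α t₀ = α₀ ∧
      (∀ t ∈ Set.Ici t₀,
        HasDerivAt α (-(α t ^ 2 / p t + q t * α t / p t + r t)) t) ∧
      (∀ t ∈ Set.Ici t₀, 0 ≤ α t) ∧
      ∀ t ∈ Set.Ici t₀,
        α₀ * Real.exp (-∫ s in t₀..t, q s / p s) /
          (1 + α₀ * ∫ τ in t₀..t,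
            Real.exp (-∫ s in t₀..τ, q s / p s) / p τ) ≤ α t := by
  have hmax : ∀ t ∈ Ici t₀, max t t₀ = t := fun t ht => max_eq_left ht
  obtain ⟨α, hα₀', hα, hcmp⟩ := exists_riccati_solution_ge_s18 hp.continuous_comp_max_const
    hq.continuous_comp_max_const hr.continuous_comp_max_const
    (fun t => hppos _ (le_max_right t t₀)) (fun t ht => by simpa [hmax t ht] using hrneg t ht) hα₀
  have hΦ : ∀ t ∈ Ici t₀, ∫ s in t₀..t, q (max s t₀) / p (max s t₀) = ∫ s in t₀..t, q s / p s :=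
    fun t ht => integral_congr fun s hs => by
      rw [uIcc_of_le ht] at hs
      simp only [hmax s hs.1]
  have hα₁ : ∀ t ∈ Ici t₀, α₀ * Real.exp (-∫ s in t₀..t, q s / p s) /
      (1 + α₀ * ∫ τ in t₀..t, Real.exp (-∫ s in t₀..τ, q s / p s) / p τ) ≤ α t := fun t ht => by
    have hI : ∫ τ in t₀..t, Real.exp (-∫ s in t₀..τ, q (max s t₀) / p (max s t₀)) / p (max τ t₀) =
        ∫ τ in t₀..t, Real.exp (-∫ s in t₀..τ, q s / p s) / p τ := integral_congr fun τ hτ => by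
      rw [uIcc_of_le ht] at hτ
      simp only [hΦ τ hτ.1, hmax τ hτ.1]
    simpa only [hΦ t ht, hI] using hcmp t ht
  refine ⟨α, hα₀', fun t ht => by simpa only [hmax t ht] using hα t ht, fun t ht => ?_, hα₁⟩
  have : 0 ≤ ∫ τ in t₀..t, Real.exp (-∫ s in t₀..τ, q s / p s) / p τ :=
    integral_nonneg ht fun τ hτ => div_nonneg (Real.exp_pos _).le (hppos τ hτ.1).le
  exact le_trans (by positivity) (hα₁ t ht)
end
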